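/- arXiv:1712.07526 — 3 statements merged into one kernel-verified Lean document; each statement's English description precedes it below -/
import Mathlib

section
/- For every α ∈ ℝ, every h > 0 and every integer j ≥ 0, one has ∫_0^h e^{α (h − s)} s^j ds = j! · h^{j+1} · φ_{j+1}(α h). -/
/-- `φ_j(z) = Σ_{n=0}^∞ z^n / (n+j)!`. -/
noncomputable def phi (j : ℕ) (z : ℝ) : ℝ := ∑' n : ℕ, z ^ n / (Nat.factorial (n + j))

/-!
The integrand has the explicit antiderivative `s ↦ j! e^{α(h-s)} s^{j+1} φ_{j+1}(αs)`, which
vanishes at `s = 0`. Differentiating the series termwise gives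
`(s^{j+1} φ_{j+1}(αs))' = s^j φ_j(αs)`, and the recurrence `φ_j(z) = 1/j! + z φ_{j+1}(z)` makes
the term coming from the derivative of the exponential cancel.
-/

open Nat

lemma summable_pow_div_factorial_add (j : ℕ) (z : ℝ) :
    Summable fun n : ℕ => z ^ n / (n + j)! := by
  refine .of_norm_bounded (Real.summable_pow_div_factorial |z|) fun n => ?_
  rw [norm_div, norm_pow, Real.norm_eq_abs, Real.norm_natCast]
  gcongr
  exact le_add_right n j

lemma phi_eq_add_mul_phi_succ (j : ℕ) (z : ℝ) :
    phi j z = 1 / j ! + z * phi (j + 1) z := by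
  rw [phi, (summable_pow_div_factorial_add j z).tsum_eq_zero_add, phi, ← tsum_mul_left]
  congr 1
  · simp
  · congr 1 with n
    rw [_root_.pow_succ', mul_div_assoc, add_right_comm, add_assoc]

lemma pow_mul_phi (j : ℕ) (α t : ℝ) :
    t ^ j * phi j (α * t) = ∑' n : ℕ, α ^ n * t ^ (n + j) / (n + j)! := by
  rw [phi, ← tsum_mul_left]
  congr 1 with n
  rw [mul_pow, pow_add]
  ring

lemma hasDerivAt_pow_div_factorial_succ (k : ℕ) (t : ℝ) :
    HasDerivAt (fun x : ℝ => x ^ (k + 1) / (k + 1)!) (t ^ k / k !) t := by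
  refine ((hasDerivAt_pow (k + 1) t).div_const ((k + 1)! : ℝ)).congr_deriv ?_
  rw [factorial_succ, cast_mul, add_tsub_cancel_right]
  field_simp

lemma hasDerivAt_pow_succ_mul_phi_succ (j : ℕ) (α s : ℝ) :
    HasDerivAt (fun t => t ^ (j + 1) * phi (j + 1) (α * t)) (s ^ j * phi j (α * s)) s := by
  set R := |s| + 1
  have bound : ∀ n, ∀ y ∈ Metric.ball (0 : ℝ) R,
      ‖α ^ n * y ^ (n + j) / (n + j)!‖ ≤ R ^ j * ((|α| * R) ^ n / (n + j)!) := by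
    intro n y hy
    rw [mem_ball_zero_iff, Real.norm_eq_abs] at hy
    rw [norm_div, norm_mul, norm_pow, norm_pow, Real.norm_natCast, Real.norm_eq_abs,
      Real.norm_eq_abs, pow_add, ← mul_assoc, ← mul_pow, mul_div_assoc', mul_comm (R ^ j)]
    gcongr
  simp_rw [pow_mul_phi]
  refine hasDerivAt_tsum_of_isPreconnected ((summable_pow_div_factorial_add j _).mul_left _)
    Metric.isOpen_ball (convex_ball 0 R).isPreconnected (fun n y _ => ?_) bound
    (Metric.mem_ball_self (by positivity)) ?_ (by simp [R])
  · simpa [← add_assoc, mul_div_assoc] using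
      (hasDerivAt_pow_div_factorial_succ (n + j) y).const_mul (α ^ n)
  · simp [← add_assoc]

lemma hasDerivAt_factorial_mul_exp_mul_pow_mul_phi (j : ℕ) (α h s : ℝ) :
    HasDerivAt (fun t => j ! * (Real.exp (α * (h - t)) * (t ^ (j + 1) * phi (j + 1) (α * t))))
      (Real.exp (α * (h - s)) * s ^ j) s := by
  have hexp : HasDerivAt (fun t => Real.exp (α * (h - t))) (Real.exp (α * (h - s)) * -α) s := by
    simpa using (((hasDerivAt_id s).const_sub h).const_mul α).exp
  refine ((hexp.mul (hasDerivAt_pow_succ_mul_phi_succ j α s)).const_mul _).congr_deriv ?_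
  rw [phi_eq_add_mul_phi_succ j]
  field_simp
  ring

theorem integral_exp_mul_pow_general (α h : ℝ) (j : ℕ) :
    ∫ s in (0 : ℝ)..h, Real.exp (α * (h - s)) * s ^ j =
      (Nat.factorial j : ℝ) * h ^ (j + 1) * phi (j + 1) (α * h) := by
  rw [intervalIntegral.integral_eq_sub_of_hasDerivAt
    (fun s _ => hasDerivAt_factorial_mul_exp_mul_pow_mul_phi j α h s)
    ((by fun_prop : Continuous fun s => Real.exp (α * (h - s)) * s ^ j).intervalIntegrable 0 h)]
  simp [mul_assoc]

theorem integral_exp_mul_pow (α h : ℝ) (hh : 0 < h) (j : ℕ) :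
    ∫ s in (0 : ℝ)..h, Real.exp (α * (h - s)) * s ^ j =
      (Nat.factorial j : ℝ) * h ^ (j + 1) * phi (j + 1) (α * h) :=
  integral_exp_mul_pow_general α h j
end

section
/- Let T > 0 and let a, b : ℝ × ℝ → ℝ be infinitely differentiable functions. Let y : [0, T] → ℝ be a differentiable solution of y'(t) = a(t, y(t))·y(t) + b(t, y(t)) on [0, T]. For an integer m ≥ 1 set h = T/m and t_n = n h, and define the RL_1 (exponential Euler) numerical solution by y^0 = y(0) and y^{n+1} = y^n + h φ_1(a(t_n, y^n) h) ( a(t_n, y^n) y^n + b(t_n, y^n) ) for 0 ≤ n < m. Then there exist constants C > 0 and h_0 > 0 such that for every m with h = T/m ≤ h_0, max_{0 ≤ n ≤ m} | y^n − y(t_n) | ≤ C h. -/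
set_option maxHeartbeats 1000000

noncomputable def phi1 (z : ℝ) : ℝ := if z = 0 then 1 else (Real.exp z - 1) / z

lemma phi1_sub_one_abs_le {z : ℝ} (hz : |z| ≤ 1) : |phi1 z - 1| ≤ |z| := by
  unfold phi1
  split_ifs with h
  · simp [h]
  · have hzp : 0 < |z| := abs_pos.mpr h
    have h1 : (Real.exp z - 1) / z - 1 = (Real.exp z - 1 - z) / z := by field_simp
    rw [h1, abs_div, div_le_iff₀ hzp]
    calc |Real.exp z - 1 - z| ≤ z ^ 2 := Real.abs_exp_sub_one_sub_id_le hz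
      _ = |z| * |z| := by rw [← sq_abs]; ring

/-- Order-1 convergence of the RL₁ (exponential Euler) scheme for
`y' = a(t,y) y + b(t,y)` on `[0, T]`. -/
theorem RL1_convergence (T : ℝ) (hT : 0 < T) (a b : ℝ × ℝ → ℝ)
    (ha : ContDiff ℝ (⊤ : ℕ∞) a) (hb : ContDiff ℝ (⊤ : ℕ∞) b) (y : ℝ → ℝ)
    (hy : ∀ t ∈ Set.Icc 0 T,
      HasDerivWithinAt y (a (t, y t) * y t + b (t, y t)) (Set.Icc 0 T) t) :
    ∃ C > 0, ∃ h0 > 0, ∀ m : ℕ, 1 ≤ m → T / m ≤ h0 →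
      ∀ Y : ℕ → ℝ, Y 0 = y 0 →
        (∀ n < m,
          Y (n + 1) =
            Y n + (T / m) * phi1 (a ((n : ℝ) * (T / m), Y n) * (T / m)) *
              (a ((n : ℝ) * (T / m), Y n) * Y n + b ((n : ℝ) * (T / m), Y n))) →
        ∀ n ≤ m, |Y n - y ((n : ℝ) * (T / m))| ≤ C * (T / m) := by
  set S : Set ℝ := Set.Icc 0 T with hSdef
  have hScomp : IsCompact S := isCompact_Icc
  have hSconv : Convex ℝ S := convex_Icc 0 T
  have hycont : ContinuousOn y S := fun t ht => (hy t ht).continuousWithinAt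
  obtain ⟨R, hR⟩ := hScomp.exists_bound_of_continuousOn hycont
  simp only [Real.norm_eq_abs] at hR
  have h0S : (0:ℝ) ∈ S := Set.left_mem_Icc.2 hT.le
  have hR0 : 0 ≤ R := le_trans (abs_nonneg _) (hR 0 h0S)
  set K : Set (ℝ × ℝ) := S ×ˢ Set.Icc (-(R+1)) (R+1) with hKdef
  have hKcomp : IsCompact K := hScomp.prod isCompact_Icc
  have hKconv : Convex ℝ K := hSconv.prod (convex_Icc _ _)
  set F : ℝ × ℝ → ℝ := fun p => a p * p.2 + b p with hFdef
  have hFapp : ∀ p : ℝ × ℝ, F p = a p * p.2 + b p := fun p => rfl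
  have hFc : ContDiff ℝ (⊤ : ℕ∞) F := (ha.mul contDiff_snd).add hb
  obtain ⟨MA, hMA⟩ := hKcomp.exists_bound_of_continuousOn ha.continuous.continuousOn
  obtain ⟨MF, hMF⟩ := hKcomp.exists_bound_of_continuousOn hFc.continuous.continuousOn
  obtain ⟨LF, hLF⟩ :=
    hKcomp.exists_bound_of_continuousOn (hFc.continuous_fderiv (by simp)).continuousOn
  simp only [Real.norm_eq_abs] at hMA hMF
  have hcurve : ∀ t ∈ S, (t, y t) ∈ K := by
    intro t ht
    refine Set.mem_prod.2 ⟨ht, Set.mem_Icc.2 ⟨?_, ?_⟩⟩ <;>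
      · obtain ⟨h1, h2⟩ := abs_le.1 (hR t ht); simp only; linarith
  have hp0K : ((0:ℝ), y 0) ∈ K := hcurve 0 h0S
  have hMA0 : 0 ≤ MA := le_trans (abs_nonneg _) (hMA _ hp0K)
  have hMF0 : 0 ≤ MF := le_trans (abs_nonneg _) (hMF _ hp0K)
  have hLF0 : 0 ≤ LF := le_trans (norm_nonneg _) (hLF _ hp0K)
  -- Lipschitz estimate for F on K
  have hFlip : ∀ p ∈ K, ∀ q ∈ K, |F q - F p| ≤ LF * ‖q - p‖ := by
    intro p hp q hq
    have := hKconv.norm_image_sub_le_of_norm_fderiv_le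
      (fun x _ => (hFc.differentiable (by simp)).differentiableAt) hLF hp hq
    simpa [Real.norm_eq_abs] using this
  -- derivative of y expressed with F
  have hy' : ∀ t ∈ S, HasDerivWithinAt y (F (t, y t)) S t := by
    intro t ht; simpa [hFapp] using hy t ht
  -- y is MF-Lipschitz on S
  have hylip : ∀ t1 ∈ S, ∀ t2 ∈ S, |y t2 - y t1| ≤ MF * |t2 - t1| := by
    intro t1 h1 t2 h2
    have := hSconv.norm_image_sub_le_of_norm_hasDerivWithin_le hy'
      (fun t ht => by simpa [Real.norm_eq_abs] using hMF _ (hcurve t ht)) h1 h2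
    simpa [Real.norm_eq_abs] using this
  -- consistency of the Euler increment
  have hcons : ∀ t1 ∈ S, ∀ t2 ∈ S, t1 ≤ t2 →
      |y t2 - y t1 - (t2 - t1) * F (t1, y t1)| ≤ LF * (1 + MF) * (t2 - t1) * (t2 - t1) := by
    intro t1 h1 t2 h2 h12
    have hsub : Set.Icc t1 t2 ⊆ S := Set.Icc_subset_Icc h1.1 h2.2
    have hw : ∀ s ∈ Set.Icc t1 t2, HasDerivWithinAt (fun s => y s - s * F (t1, y t1))
        (F (s, y s) - F (t1, y t1)) (Set.Icc t1 t2) s := by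
      intro s hs
      exact ((hy' s (hsub hs)).mono hsub).sub ((hasDerivAt_mul_const _).hasDerivWithinAt)
    have hbound : ∀ s ∈ Set.Icc t1 t2,
        ‖F (s, y s) - F (t1, y t1)‖ ≤ LF * (1 + MF) * (t2 - t1) := by
      intro s hs
      have hsS := hsub hs
      have hlipFs := hFlip _ (hcurve t1 h1) _ (hcurve s hsS)
      have hdiff : ((s, y s) : ℝ × ℝ) - (t1, y t1) = (s - t1, y s - y t1) := rfl
      have e1 : |s - t1| ≤ t2 - t1 := by
        rw [abs_of_nonneg (by linarith [hs.1])]; linarith [hs.2]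
      have e2 : |y s - y t1| ≤ MF * (t2 - t1) := by
        calc |y s - y t1| ≤ MF * |s - t1| := hylip t1 h1 s hsS
          _ ≤ MF * (t2 - t1) := mul_le_mul_of_nonneg_left e1 hMF0
      have hnorm : ‖((s, y s) : ℝ × ℝ) - (t1, y t1)‖ ≤ (1 + MF) * (t2 - t1) := by
        rw [hdiff, Prod.norm_def]
        simp only [Real.norm_eq_abs]
        apply max_le <;> nlinarith
      rw [Real.norm_eq_abs]
      calc |F (s, y s) - F (t1, y t1)| ≤ LF * ‖((s, y s) : ℝ × ℝ) - (t1, y t1)‖ := hlipFs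
        _ ≤ LF * ((1 + MF) * (t2 - t1)) := mul_le_mul_of_nonneg_left hnorm hLF0
        _ = LF * (1 + MF) * (t2 - t1) := by ring
    have key := (convex_Icc t1 t2).norm_image_sub_le_of_norm_hasDerivWithin_le hw hbound
      (Set.left_mem_Icc.2 h12) (Set.right_mem_Icc.2 h12)
    have e : y t2 - t2 * F (t1, y t1) - (y t1 - t1 * F (t1, y t1))
        = y t2 - y t1 - (t2 - t1) * F (t1, y t1) := by ring
    rw [Real.norm_eq_abs, Real.norm_eq_abs, e] at key
    calc |y t2 - y t1 - (t2 - t1) * F (t1, y t1)| ≤ LF * (1 + MF) * (t2 - t1) * |t2 - t1| := key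
      _ = LF * (1 + MF) * (t2 - t1) * (t2 - t1) := by
          rw [abs_of_nonneg (by linarith : (0:ℝ) ≤ t2 - t1)]
  set C1 : ℝ := MA * MF + LF * (1 + MF) + 1 with hC1def
  have hC1pos : 0 < C1 := by
    have h1 := mul_nonneg hMA0 hMF0
    have h2 := mul_nonneg hLF0 (by linarith : (0:ℝ) ≤ 1 + MF)
    rw [hC1def]; linarith
  set Cf : ℝ := C1 * T * Real.exp (LF * T) with hCfdef
  have hCfpos : 0 < Cf := mul_pos (mul_pos hC1pos hT) (Real.exp_pos _)
  refine ⟨Cf, hCfpos, min (MA + 1)⁻¹ Cf⁻¹,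
    lt_min (inv_pos.2 (by linarith)) (inv_pos.2 hCfpos), ?_⟩
  intro m hm hh0 Y hY0 hrec
  have hmpos : (0:ℝ) < m := by exact_mod_cast Nat.lt_of_lt_of_le Nat.zero_lt_one hm
  set δ : ℝ := T / m with hδdef
  have hδpos : 0 < δ := div_pos hT hmpos
  have hmδ : (m:ℝ) * δ = T := by rw [hδdef]; field_simp
  have hδA : MA * δ ≤ 1 := by
    have hA : δ ≤ (MA + 1)⁻¹ := le_trans hh0 (min_le_left _ _)
    have h1 : (0:ℝ) < MA + 1 := by linarith
    calc MA * δ ≤ MA * (MA + 1)⁻¹ := mul_le_mul_of_nonneg_left hA hMA0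
      _ ≤ 1 := by rw [← div_eq_mul_inv, div_le_one h1]; linarith
  have hδC : Cf * δ ≤ 1 := by
    have hA : δ ≤ Cf⁻¹ := le_trans hh0 (min_le_right _ _)
    calc Cf * δ ≤ Cf * Cf⁻¹ := mul_le_mul_of_nonneg_left hA hCfpos.le
      _ = 1 := mul_inv_cancel₀ hCfpos.ne'
  -- the discrete bound is at most Cf * δ
  have hglob : ∀ n : ℕ, n ≤ m → C1 * δ ^ 2 * n * (1 + δ * LF) ^ n ≤ Cf * δ := by
    intro n hn
    have hnh : (n:ℝ) * δ ≤ T := by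
      calc (n:ℝ) * δ ≤ (m:ℝ) * δ :=
            mul_le_mul_of_nonneg_right (by exact_mod_cast hn) hδpos.le
        _ = T := hmδ
    have hpow : (1 + δ * LF) ^ n ≤ Real.exp (LF * T) := by
      calc (1 + δ * LF) ^ n ≤ (Real.exp (δ * LF)) ^ n := by
            apply pow_le_pow_left₀ (by positivity)
            linarith [Real.add_one_le_exp (δ * LF)]
        _ = Real.exp ((n:ℝ) * (δ * LF)) := (Real.exp_nat_mul _ n).symm
        _ ≤ Real.exp (LF * T) := Real.exp_le_exp.2 (by nlinarith)
    have hnn : (0:ℝ) ≤ (n:ℝ) := Nat.cast_nonneg n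
    have hpnn : (0:ℝ) ≤ (1 + δ * LF) ^ n := by positivity
    calc C1 * δ ^ 2 * n * (1 + δ * LF) ^ n
        = (C1 * δ) * (((n:ℝ) * δ) * (1 + δ * LF) ^ n) := by ring
      _ ≤ (C1 * δ) * (T * Real.exp (LF * T)) := by
          apply mul_le_mul_of_nonneg_left _ (by positivity)
          have h1 : ((n:ℝ) * δ) * (1 + δ * LF) ^ n ≤ T * (1 + δ * LF) ^ n :=
            mul_le_mul_of_nonneg_right hnh hpnn
          have h2 : T * (1 + δ * LF) ^ n ≤ T * Real.exp (LF * T) :=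
            mul_le_mul_of_nonneg_left hpow hT.le
          linarith
      _ = Cf * δ := by rw [hCfdef]; ring
  have main : ∀ n : ℕ, n ≤ m → |Y n - y ((n:ℝ) * δ)| ≤ C1 * δ ^ 2 * n * (1 + δ * LF) ^ n := by
    intro n
    induction n with
    | zero => intro _; simp [hY0]
    | succ n ih =>
      intro hn1
      have hnm : n < m := Nat.lt_of_succ_le hn1
      have ihn := ih hnm.le
      have htnS : (n:ℝ) * δ ∈ S := by
        rw [hSdef]
        refine Set.mem_Icc.2 ⟨by positivity, ?_⟩
        calc (n:ℝ) * δ ≤ (m:ℝ) * δ :=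
              mul_le_mul_of_nonneg_right (by exact_mod_cast hnm.le) hδpos.le
          _ = T := hmδ
      have htn1S : ((n:ℝ) + 1) * δ ∈ S := by
        rw [hSdef]
        refine Set.mem_Icc.2 ⟨by positivity, ?_⟩
        calc ((n:ℝ) + 1) * δ ≤ (m:ℝ) * δ := by
              have : (n:ℝ) + 1 ≤ (m:ℝ) := by exact_mod_cast hn1
              exact mul_le_mul_of_nonneg_right this hδpos.le
          _ = T := hmδ
      have hbound1 : |Y n - y ((n:ℝ) * δ)| ≤ 1 :=
        le_trans ihn (le_trans (hglob n hnm.le) hδC)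
      have hPn : (((n:ℝ) * δ, Y n) : ℝ × ℝ) ∈ K := by
        refine Set.mem_prod.2 ⟨htnS, Set.mem_Icc.2 ⟨?_, ?_⟩⟩ <;>
          · obtain ⟨e1, e2⟩ := abs_le.1 (hR _ htnS)
            obtain ⟨e3, e4⟩ := abs_le.1 hbound1
            simp only; linarith
      have hQn : (((n:ℝ) * δ, y ((n:ℝ) * δ)) : ℝ × ℝ) ∈ K := hcurve _ htnS
      have hstep := hrec n hnm
      have hz : |a ((n:ℝ) * δ, Y n) * δ| ≤ 1 := by
        rw [abs_mul, abs_of_pos hδpos]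
        calc |a ((n:ℝ) * δ, Y n)| * δ ≤ MA * δ :=
              mul_le_mul_of_nonneg_right (hMA _ hPn) hδpos.le
          _ ≤ 1 := hδA
      have hφ : |phi1 (a ((n:ℝ) * δ, Y n) * δ) - 1| ≤ MA * δ := by
        refine le_trans (phi1_sub_one_abs_le hz) ?_
        rw [abs_mul, abs_of_pos hδpos]
        exact mul_le_mul_of_nonneg_right (hMA _ hPn) hδpos.le
      have hc := hcons ((n:ℝ) * δ) htnS (((n:ℝ) + 1) * δ) htn1S (by nlinarith)
      have ec : ((n:ℝ) + 1) * δ - (n:ℝ) * δ = δ := by ring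
      rw [ec] at hc
      have hL : |F ((n:ℝ) * δ, Y n) - F ((n:ℝ) * δ, y ((n:ℝ) * δ))|
          ≤ LF * |Y n - y ((n:ℝ) * δ)| := by
        have h1 := hFlip _ hQn _ hPn
        have h2 : ((((n:ℝ) * δ, Y n)) : ℝ × ℝ) - ((n:ℝ) * δ, y ((n:ℝ) * δ))
            = (0, Y n - y ((n:ℝ) * δ)) := by simp
        rw [h2, Prod.norm_def] at h1
        simpa [Real.norm_eq_abs] using h1
      have hFPn : |F ((n:ℝ) * δ, Y n)| ≤ MF := hMF _ hPn
      have key : |Y (n + 1) - y (((n:ℝ) + 1) * δ)|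
          ≤ (1 + δ * LF) * |Y n - y ((n:ℝ) * δ)| + C1 * δ ^ 2 := by
        have iden : Y (n + 1) - y (((n:ℝ) + 1) * δ) =
            (Y n - y ((n:ℝ) * δ))
            + δ * (F ((n:ℝ) * δ, Y n) - F ((n:ℝ) * δ, y ((n:ℝ) * δ)))
            + δ * (phi1 (a ((n:ℝ) * δ, Y n) * δ) - 1) * F ((n:ℝ) * δ, Y n)
            - (y (((n:ℝ) + 1) * δ) - y ((n:ℝ) * δ) - δ * F ((n:ℝ) * δ, y ((n:ℝ) * δ))) := by
          rw [hstep, hFapp, hFapp]; simp only; ring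
        have t1 : |δ * (F ((n:ℝ) * δ, Y n) - F ((n:ℝ) * δ, y ((n:ℝ) * δ)))|
            ≤ δ * (LF * |Y n - y ((n:ℝ) * δ)|) := by
          rw [abs_mul, abs_of_pos hδpos]
          exact mul_le_mul_of_nonneg_left hL hδpos.le
        have t2 : |δ * (phi1 (a ((n:ℝ) * δ, Y n) * δ) - 1) * F ((n:ℝ) * δ, Y n)|
            ≤ δ * ((MA * δ) * MF) := by
          rw [abs_mul, abs_mul, abs_of_pos hδpos, mul_assoc]
          exact mul_le_mul_of_nonneg_left
            (mul_le_mul hφ hFPn (abs_nonneg _) (mul_nonneg hMA0 hδpos.le)) hδpos.le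
        rw [iden]
        have tri : ∀ A B C D : ℝ, |A + B + C - D| ≤ |A| + |B| + |C| + |D| := by
          intro A B C D
          calc |A + B + C - D| ≤ |A + B + C| + |D| := abs_sub _ _
            _ ≤ |A + B| + |C| + |D| := by linarith [abs_add_le (A + B) C]
            _ ≤ |A| + |B| + |C| + |D| := by linarith [abs_add_le A B]
        refine le_trans (tri _ _ _ _) ?_
        have sum := add_le_add (add_le_add (add_le_add
          (le_refl |Y n - y ((n:ℝ) * δ)|) t1) t2) hc
        refine le_trans sum ?_
        have e2 : |Y n - y ((n:ℝ) * δ)| + δ * (LF * |Y n - y ((n:ℝ) * δ)|)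
            + δ * ((MA * δ) * MF) + LF * (1 + MF) * δ * δ
            = (1 + δ * LF) * |Y n - y ((n:ℝ) * δ)| + (MA * MF + LF * (1 + MF)) * δ ^ 2 := by
          ring
        rw [e2, hC1def]
        have := sq_nonneg δ
        nlinarith
      have hδLF0 : (0:ℝ) ≤ δ * LF := mul_nonneg hδpos.le hLF0
      have hone : (1:ℝ) ≤ (1 + δ * LF) ^ (n + 1) :=
        one_le_pow₀ (by linarith)
      have hpnn : (0:ℝ) ≤ (1 + δ * LF) ^ n := by positivity
      have hδLF : (0:ℝ) ≤ 1 + δ * LF := by linarith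
      push_cast
      calc |Y (n + 1) - y (((n:ℝ) + 1) * δ)|
          ≤ (1 + δ * LF) * |Y n - y ((n:ℝ) * δ)| + C1 * δ ^ 2 := key
        _ ≤ (1 + δ * LF) * (C1 * δ ^ 2 * n * (1 + δ * LF) ^ n) + C1 * δ ^ 2 := by
            have := mul_le_mul_of_nonneg_left ihn hδLF
            linarith
        _ = C1 * δ ^ 2 * ((n:ℝ) * (1 + δ * LF) ^ (n + 1) + 1) := by ring
        _ ≤ C1 * δ ^ 2 * (((n:ℝ) + 1) * (1 + δ * LF) ^ (n + 1)) := by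
            apply mul_le_mul_of_nonneg_left _ (by positivity)
            nlinarith [Nat.cast_nonneg (α := ℝ) n]
        _ = C1 * δ ^ 2 * ((n:ℝ) + 1) * (1 + δ * LF) ^ (n + 1) := by ring
  intro n hn
  exact le_trans (main n hn) (hglob n hn)
end

section
/- Let T > 0 and let a, b : ℝ × ℝ → ℝ be infinitely differentiable functions. Let y : [0, T] → ℝ be a differentiable solution of y'(t) = a(t, y(t))·y(t) + b(t, y(t)) on [0, T]. For an integer m ≥ 2 set h = T/m and t_n = n h; define the RL_2 numerical solution by y^0 = y(0), y^1 = y(t_1), and for 1 ≤ n < m, with a_n = a(t_n, y^n), b_n = b(t_n, y^n), α_n = (3/2)a_n − (1/2)a_{n−1}, β_n = (3/2)b_n − (1/2)b_{n−1}, y^{n+1} = y^n + h φ_1(α_n h)(α_n y^n + β_n). Then there exist constants C > 0 and h_0 > 0 such that for every m with h = T/m ≤ h_0, max_{0 ≤ n ≤ m} | y^n − y(t_n) | ≤ C h^2. -/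
lemma phi1_integral (z : ℝ) : phi1 z = ∫ s in (0:ℝ)..1, Real.exp (z * s) := by
  rcases eq_or_ne z 0 with h | h
  · simp [phi1, h]
  · have hF : ∀ s ∈ Set.uIcc (0:ℝ) 1, HasDerivAt (fun s => Real.exp (z * s) / z)
        (Real.exp (z * s)) s := by
      intro s _
      have h1 : HasDerivAt (fun s : ℝ => z * s) z s := by
        simpa using (hasDerivAt_id s).const_mul z
      have h2 := (Real.hasDerivAt_exp (z * s)).comp s h1
      have h3 := h2.div_const z
      have he : Real.exp (z * s) * z / z = Real.exp (z * s) := by field_simp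
      rw [he] at h3
      exact h3
    have := intervalIntegral.integral_eq_sub_of_hasDerivAt hF
      ((Real.continuous_exp.comp (continuous_const.mul continuous_id)).intervalIntegrable 0 1)
    rw [this]
    simp [phi1, h, sub_div]

lemma exp_lip {u v : ℝ} (hu : u ≤ 1) (hv : v ≤ 1) :
    |Real.exp u - Real.exp v| ≤ 3 * |u - v| := by
  have key : ∀ p q : ℝ, p ≤ 1 → q ≤ p → Real.exp p - Real.exp q ≤ 3 * (p - q) := by
    intro p q hp hqp
    have h1 : Real.exp p * (q - p + 1) ≤ Real.exp q := by
      calc Real.exp p * (q - p + 1) ≤ Real.exp p * Real.exp (q - p) :=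
            mul_le_mul_of_nonneg_left (Real.add_one_le_exp (q-p)) (Real.exp_pos p).le
        _ = Real.exp q := by rw [← Real.exp_add]; ring_nf
    have h3 : Real.exp p ≤ 3 := by
      calc Real.exp p ≤ Real.exp 1 := Real.exp_le_exp.2 hp
        _ ≤ 3 := by have := Real.exp_one_lt_d9; linarith
    nlinarith [Real.exp_pos p]
  rcases le_total v u with h | h
  · have h0 := key u v hu h
    have hmo : Real.exp v ≤ Real.exp u := Real.exp_le_exp.2 h
    rw [abs_of_nonneg (by linarith), abs_of_nonneg (by linarith)]
    linarith
  · have h0 := key v u hv h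
    have hmo : Real.exp u ≤ Real.exp v := Real.exp_le_exp.2 h
    rw [abs_of_nonpos (by linarith), abs_of_nonpos (by linarith)]
    linarith

lemma phi1_lip {z w : ℝ} (hz : |z| ≤ 1) (hw : |w| ≤ 1) :
    |phi1 z - phi1 w| ≤ 3 * |z - w| := by
  rw [phi1_integral z, phi1_integral w]
  have hiz : IntervalIntegrable (fun s => Real.exp (z * s)) MeasureTheory.volume 0 1 :=
    (Real.continuous_exp.comp (continuous_const.mul continuous_id)).intervalIntegrable 0 1
  have hiw : IntervalIntegrable (fun s => Real.exp (w * s)) MeasureTheory.volume 0 1 :=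
    (Real.continuous_exp.comp (continuous_const.mul continuous_id)).intervalIntegrable 0 1
  rw [← intervalIntegral.integral_sub hiz hiw]
  have key := intervalIntegral.norm_integral_le_of_norm_le_const
    (C := 3 * |z - w|) (f := fun s => Real.exp (z*s) - Real.exp (w*s))
    (a := (0:ℝ)) (b := 1) ?_
  · simpa using key
  · intro s hs
    rw [Set.uIoc_of_le (by norm_num : (0:ℝ) ≤ 1)] at hs
    obtain ⟨hs0, hs1⟩ := hs
    have h1 : z * s ≤ 1 := by
      calc z * s ≤ |z * s| := le_abs_self _
        _ = |z| * |s| := abs_mul _ _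
        _ ≤ 1 * 1 := by
            apply mul_le_mul hz _ (abs_nonneg _) (by norm_num)
            rw [abs_of_nonneg hs0.le]; exact hs1
        _ = 1 := by norm_num
    have h2 : w * s ≤ 1 := by
      calc w * s ≤ |w * s| := le_abs_self _
        _ = |w| * |s| := abs_mul _ _
        _ ≤ 1 * 1 := by
            apply mul_le_mul hw _ (abs_nonneg _) (by norm_num)
            rw [abs_of_nonneg hs0.le]; exact hs1
        _ = 1 := by norm_num
    calc ‖Real.exp (z*s) - Real.exp (w*s)‖ ≤ 3 * |z*s - w*s| := exp_lip h1 h2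
      _ = 3 * (|z - w| * |s|) := by rw [← abs_mul]; ring_nf
      _ ≤ 3 * (|z - w| * 1) := by
          apply mul_le_mul_of_nonneg_left _ (by norm_num)
          apply mul_le_mul_of_nonneg_left _ (abs_nonneg _)
          rw [abs_of_nonneg hs0.le]; exact hs1
      _ = 3 * |z - w| := by ring


lemma phi1_quad {z : ℝ} (hz : |z| ≤ 1) : |phi1 z - 1 - z/2| ≤ z^2 := by
  rcases eq_or_ne z 0 with h | h
  · simp [phi1, h]
  · have hb := Real.exp_bound hz (by norm_num : 0 < 3)
    have hsum : ∑ m ∈ Finset.range 3, z ^ m / (m.factorial : ℝ) = 1 + z + z^2/2 := by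
      norm_num [Finset.sum_range_succ]
    rw [hsum] at hb
    have habs : |z| > 0 := abs_pos.2 h
    have key : phi1 z - 1 - z/2 = (Real.exp z - (1 + z + z^2/2)) / z := by
      simp only [phi1, if_neg h]
      field_simp
      ring
    rw [key, abs_div]
    rw [div_le_iff₀ habs]
    calc |Real.exp z - (1 + z + z^2/2)| ≤ |z|^3 * ((3:ℕ).succ / ((3:ℕ).factorial * 3)) := hb
      _ = |z|^3 * (2/9) := by norm_num [Nat.factorial]
      _ ≤ |z|^3 * 1 := by
          apply mul_le_mul_of_nonneg_left (by norm_num) (by positivity)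
      _ = z^2 * |z| := by
          rw [mul_one, pow_succ, sq_abs, sq]

lemma phi1_bound {z : ℝ} (hz : |z| ≤ 1) : |phi1 z| ≤ 3 := by
  have h1 := phi1_quad hz
  have h2 := abs_le.1 hz
  have h3 : z^2 ≤ 1 := by nlinarith
  have h4 := abs_le.1 h1
  rw [abs_le]
  exact ⟨by linarith [h4.1, h2.1, h2.2], by linarith [h4.2, h2.1, h2.2]⟩


lemma mvt_abs {s : Set ℝ} (hconv : Convex ℝ s) {R R' : ℝ → ℝ} {K : ℝ}
    (hR : ∀ x ∈ s, HasDerivWithinAt R (R' x) s x)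
    (hbd : ∀ x ∈ s, |R' x| ≤ K) {t u : ℝ} (ht : t ∈ s) (hu : u ∈ s) :
    |R u - R t| ≤ K * |u - t| := by
  have := hconv.norm_image_sub_le_of_norm_hasDerivWithin_le hR
    (fun x hx => by rw [Real.norm_eq_abs]; exact hbd x hx) ht hu
  simpa [Real.norm_eq_abs] using this

lemma taylor1 {s : Set ℝ} (hconv : Convex ℝ s) {g g1 : ℝ → ℝ} {L : ℝ} (hL : 0 ≤ L)
    (hg : ∀ x ∈ s, HasDerivWithinAt g (g1 x) s x)
    (hLip : ∀ x ∈ s, ∀ z ∈ s, |g1 x - g1 z| ≤ L * |x - z|)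
    {t u : ℝ} (ht : t ∈ s) (hu : u ∈ s) :
    |g u - g t - (u - t) * g1 t| ≤ L * |u - t|^2 := by
  set s' := s ∩ Set.uIcc t u with hs'
  have hsub : s' ⊆ s := Set.inter_subset_left
  have hconv' : Convex ℝ s' := hconv.inter (convex_uIcc t u)
  have ht' : t ∈ s' := ⟨ht, Set.left_mem_uIcc⟩
  have hu' : u ∈ s' := ⟨hu, Set.right_mem_uIcc⟩
  have hR : ∀ x ∈ s', HasDerivWithinAt (fun x => g x - x * g1 t) (g1 x - g1 t) s' x := by
    intro x hx
    exact ((hg x (hsub hx)).mono hsub).sub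
      (by simpa using (hasDerivWithinAt_id x s').mul_const (g1 t))
  have hbd : ∀ x ∈ s', |g1 x - g1 t| ≤ L * |u - t| := by
    intro x hx
    calc |g1 x - g1 t| ≤ L * |x - t| := hLip x (hsub hx) t ht
      _ ≤ L * |u - t| := mul_le_mul_of_nonneg_left (Set.abs_sub_left_of_mem_uIcc hx.2) hL
  have key := mvt_abs hconv' hR hbd ht' hu'
  have : g u - u * g1 t - (g t - t * g1 t) = g u - g t - (u - t) * g1 t := by ring
  rw [this] at key
  calc |g u - g t - (u - t) * g1 t| ≤ L * |u - t| * |u - t| := key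
    _ = L * |u - t|^2 := by ring

lemma taylor2 {s : Set ℝ} (hconv : Convex ℝ s) {g g1 g2 : ℝ → ℝ} {L : ℝ} (hL : 0 ≤ L)
    (hg : ∀ x ∈ s, HasDerivWithinAt g (g1 x) s x)
    (hg1 : ∀ x ∈ s, HasDerivWithinAt g1 (g2 x) s x)
    (hLip : ∀ x ∈ s, ∀ z ∈ s, |g2 x - g2 z| ≤ L * |x - z|)
    {t u : ℝ} (ht : t ∈ s) (hu : u ∈ s) :
    |g u - g t - (u - t) * g1 t - (u - t)^2/2 * g2 t| ≤ L * |u - t|^3 := by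
  set s' := s ∩ Set.uIcc t u with hs'
  have hsub : s' ⊆ s := Set.inter_subset_left
  have hconv' : Convex ℝ s' := hconv.inter (convex_uIcc t u)
  have ht' : t ∈ s' := ⟨ht, Set.left_mem_uIcc⟩
  have hu' : u ∈ s' := ⟨hu, Set.right_mem_uIcc⟩
  have hR : ∀ x ∈ s', HasDerivWithinAt (fun x => g x - x * g1 t - (x - t)^2/2 * g2 t)
      (g1 x - g1 t - (x - t) * g2 t) s' x := by
    intro x hx
    have h1 : HasDerivWithinAt (fun x => (x - t)^2/2 * g2 t) ((x - t) * g2 t) s' x := by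
      have := (((hasDerivWithinAt_id x s').sub_const t).pow 2).div_const 2 |>.mul_const (g2 t)
      simpa using this.congr_deriv (by simp only [id_eq]; ring)
    exact (((hg x (hsub hx)).mono hsub).sub
      (by simpa using (hasDerivWithinAt_id x s').mul_const (g1 t))).sub h1
  have hbd : ∀ x ∈ s', |g1 x - g1 t - (x - t) * g2 t| ≤ (L * |u - t|^2) := by
    intro x hx
    calc |g1 x - g1 t - (x - t) * g2 t| ≤ L * |x - t|^2 :=
          taylor1 hconv hL hg1 hLip ht (hsub hx)
      _ ≤ L * |u - t|^2 := by
          apply mul_le_mul_of_nonneg_left _ hL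
          exact pow_le_pow_left₀ (abs_nonneg _) (Set.abs_sub_left_of_mem_uIcc hx.2) 2
  have key := mvt_abs hconv' hR hbd ht' hu'
  have heq : g u - u * g1 t - (u - t)^2/2 * g2 t - (g t - t * g1 t - (t - t)^2/2 * g2 t)
      = g u - g t - (u - t) * g1 t - (u - t)^2/2 * g2 t := by ring
  rw [heq] at key
  calc |g u - g t - (u - t) * g1 t - (u - t)^2/2 * g2 t| ≤ L * |u - t|^2 * |u - t| := key
    _ = L * |u - t|^3 := by ring

lemma lip_of_cd {g : ℝ → ℝ} {s : Set ℝ} (hcomp : IsCompact s) (hconv : Convex ℝ s)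
    (hs : UniqueDiffOn ℝ s) (hg : ContDiffOn ℝ 1 g s) :
    ∃ L, 0 ≤ L ∧ ∀ x ∈ s, ∀ z ∈ s, |g x - g z| ≤ L * |x - z| := by
  have hd : DifferentiableOn ℝ g s := hg.differentiableOn one_ne_zero
  have hc : ContinuousOn (derivWithin g s) s := hg.continuousOn_derivWithin hs (le_refl _)
  obtain ⟨M, hM⟩ := hcomp.exists_bound_of_continuousOn hc
  refine ⟨max M 0, le_max_right _ _, fun x hx z hz => ?_⟩
  have := hconv.norm_image_sub_le_of_norm_derivWithin_le (C := max M 0) hd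
    (fun w hw => (hM w hw).trans (le_max_left _ _)) hz hx
  simpa [Real.norm_eq_abs] using this

lemma lip2_of_cd {F : ℝ × ℝ → ℝ} (hF : ContDiff ℝ (⊤ : ℕ∞) F) {K : Set (ℝ × ℝ)}
    (hK : IsCompact K) (hKc : Convex ℝ K) :
    ∃ L, 0 ≤ L ∧ ∀ p ∈ K, ∀ q ∈ K, |F p - F q| ≤ L * (|p.1 - q.1| + |p.2 - q.2|) := by
  have hfd : Continuous fun p => ‖fderiv ℝ F p‖ := (hF.continuous_fderiv (by simp)).norm
  obtain ⟨M, hM⟩ := hK.exists_bound_of_continuousOn hfd.continuousOn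
  refine ⟨max M 0, le_max_right _ _, fun p hp q hq => ?_⟩
  have key := hKc.norm_image_sub_le_of_norm_fderiv_le (C := max M 0)
    (fun x _ => (hF.differentiable (by simp)).differentiableAt)
    (fun w hw => (show ‖fderiv ℝ F w‖ ≤ M by simpa using hM w hw).trans (le_max_left _ _)) hq hp
  have hnorm : ‖p - q‖ ≤ |p.1 - q.1| + |p.2 - q.2| := by
    rw [Prod.norm_def]
    apply max_le
    · have := abs_nonneg (p.2 - q.2)
      simp only [Prod.fst_sub, Real.norm_eq_abs]
      linarith
    · have := abs_nonneg (p.1 - q.1)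
      simp only [Prod.snd_sub, Real.norm_eq_abs]
      linarith
  calc |F p - F q| = ‖F p - F q‖ := (Real.norm_eq_abs _).symm
    _ ≤ max M 0 * ‖p - q‖ := key
    _ ≤ max M 0 * (|p.1 - q.1| + |p.2 - q.2|) :=
        mul_le_mul_of_nonneg_left hnorm (le_max_right _ _)

set_option maxHeartbeats 1000000 in
lemma truncation {I : Set ℝ} (hconv : Convex ℝ I)
    {A B A1 B1 y y1 y2 : ℝ → ℝ} {P h t : ℝ}
    (hP : 1 ≤ P) (hh : 0 < h) (hPh : 2 * P * h ≤ 1)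
    (ht : t ∈ I) (htp : t + h ∈ I) (htm : t - h ∈ I)
    (hyd : ∀ x ∈ I, HasDerivWithinAt y (y1 x) I x)
    (hy1d : ∀ x ∈ I, HasDerivWithinAt y1 (y2 x) I x)
    (hAd : ∀ x ∈ I, HasDerivWithinAt A (A1 x) I x)
    (hBd : ∀ x ∈ I, HasDerivWithinAt B (B1 x) I x)
    (hy1eq : ∀ x ∈ I, y1 x = A x * y x + B x)
    (hy2eq : ∀ x ∈ I, y2 x = A1 x * y x + A x * y1 x + B1 x)
    (bA : ∀ x ∈ I, |A x| ≤ P) (bB : ∀ x ∈ I, |B x| ≤ P)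
    (bA1 : ∀ x ∈ I, |A1 x| ≤ P) (bB1 : ∀ x ∈ I, |B1 x| ≤ P)
    (by0 : ∀ x ∈ I, |y x| ≤ P) (by1 : ∀ x ∈ I, |y1 x| ≤ P)
    (lA1 : ∀ x ∈ I, ∀ z ∈ I, |A1 x - A1 z| ≤ P * |x - z|)
    (lB1 : ∀ x ∈ I, ∀ z ∈ I, |B1 x - B1 z| ≤ P * |x - z|)
    (ly2 : ∀ x ∈ I, ∀ z ∈ I, |y2 x - y2 z| ≤ P * |x - z|) :
    |y (t + h) - y t - h * phi1 (((3/2) * A t - (1/2) * A (t - h)) * h) *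
      (((3/2) * A t - (1/2) * A (t - h)) * y t + ((3/2) * B t - (1/2) * B (t - h)))|
      ≤ 24 * P ^ 4 * h ^ 3 := by
  have hP0 : (0:ℝ) < P := lt_of_lt_of_le one_pos hP
  have hh2 : h ≤ 1/2 := by
    have := mul_le_mul_of_nonneg_right hP (by linarith : (0:ℝ) ≤ 2*h)
    linarith
  have habs : |t - h - t| = h := by
    rw [show t - h - t = -h by ring, abs_neg, abs_of_pos hh]
  have habs2 : |t + h - t| = h := by
    rw [show t + h - t = h by ring, abs_of_pos hh]
  obtain ⟨α, hαdef⟩ : ∃ α : ℝ, α = (3/2) * A t - (1/2) * A (t - h) := ⟨_, rfl⟩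
  obtain ⟨β, hβdef⟩ : ∃ β : ℝ, β = (3/2) * B t - (1/2) * B (t - h) := ⟨_, rfl⟩
  rw [← hαdef, ← hβdef]
  -- Taylor of A and B backwards
  have tA := taylor1 hconv hP0.le hAd lA1 ht htm
  have tB := taylor1 hconv hP0.le hBd lB1 ht htm
  rw [habs] at tA tB
  have hα : |α - A t - h/2 * A1 t| ≤ P * h^2 := by
    have heq : α - A t - h/2 * A1 t
        = -(1/2) * (A (t-h) - A t - (t - h - t) * A1 t) := by rw [hαdef]; ring
    rw [heq, abs_mul]
    calc |(-(1/2) : ℝ)| * |A (t-h) - A t - (t - h - t) * A1 t| ≤ (1/2) * (P * h^2) := by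
          apply mul_le_mul _ tA (abs_nonneg _) (by norm_num)
          rw [abs_neg, abs_of_nonneg]; norm_num
      _ ≤ P * h^2 := by
          have := mul_nonneg hP0.le (sq_nonneg h)
          linarith
  have hβ : |β - B t - h/2 * B1 t| ≤ P * h^2 := by
    have heq : β - B t - h/2 * B1 t
        = -(1/2) * (B (t-h) - B t - (t - h - t) * B1 t) := by rw [hβdef]; ring
    rw [heq, abs_mul]
    calc |(-(1/2) : ℝ)| * |B (t-h) - B t - (t - h - t) * B1 t| ≤ (1/2) * (P * h^2) := by
          apply mul_le_mul _ tB (abs_nonneg _) (by norm_num)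
          rw [abs_neg, abs_of_nonneg]; norm_num
      _ ≤ P * h^2 := by
          have := mul_nonneg hP0.le (sq_nonneg h)
          linarith
  -- bounds on α, β
  have hAt := abs_le.1 (bA t ht)
  have hAtm := abs_le.1 (bA (t-h) htm)
  have hBt := abs_le.1 (bB t ht)
  have hBtm := abs_le.1 (bB (t-h) htm)
  have hαb : |α| ≤ 2*P := abs_le.2 ⟨by rw [hαdef]; linarith, by rw [hαdef]; linarith⟩
  have hβb : |β| ≤ 2*P := abs_le.2 ⟨by rw [hβdef]; linarith, by rw [hβdef]; linarith⟩
  have hαh : |α * h| ≤ 1 := by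
    rw [abs_mul, abs_of_pos hh]
    have := mul_le_mul_of_nonneg_right hαb hh.le
    linarith
  -- D and its estimates
  obtain ⟨D, hDdef⟩ : ∃ D : ℝ, D = α * y t + β := ⟨_, rfl⟩
  rw [← hDdef]
  have hyt := abs_le.1 (by0 t ht)
  have hy1t := abs_le.1 (by1 t ht)
  have hA1t := abs_le.1 (bA1 t ht)
  have hB1t := abs_le.1 (bB1 t ht)
  have hD1 : |D - y1 t - h/2 * (A1 t * y t + B1 t)| ≤ 2*P^2*h^2 := by
    have heq : D - y1 t - h/2 * (A1 t * y t + B1 t)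
        = (α - A t - h/2 * A1 t) * y t + (β - B t - h/2 * B1 t) := by
      rw [hDdef, hy1eq t ht]; ring
    rw [heq]
    calc |(α - A t - h/2 * A1 t) * y t + (β - B t - h/2 * B1 t)|
        ≤ |(α - A t - h/2 * A1 t) * y t| + |β - B t - h/2 * B1 t| := abs_add_le _ _
      _ = |α - A t - h/2 * A1 t| * |y t| + |β - B t - h/2 * B1 t| := by rw [abs_mul]
      _ ≤ (P * h^2) * P + P * h^2 := by
          apply add_le_add _ hβ
          exact mul_le_mul hα (by0 t ht) (abs_nonneg _) (by positivity)
      _ ≤ 2*P^2*h^2 := by linarith [mul_nonneg (mul_nonneg (sub_nonneg.2 hP) hP0.le) (sq_nonneg h)]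
  have hDb : |D| ≤ 4*P^2 := by
    rw [hDdef]
    calc |α * y t + β| ≤ |α * y t| + |β| := abs_add_le _ _
      _ = |α| * |y t| + |β| := by rw [abs_mul]
      _ ≤ 2*P * P + 2*P := add_le_add (mul_le_mul hαb (by0 t ht) (abs_nonneg _) (by positivity)) hβb
      _ ≤ 4*P^2 := by linarith [mul_nonneg (sub_nonneg.2 hP) hP0.le]
  have hDy1 : |D - y1 t| ≤ 3*P^2*h := by
    have h1 : |h/2 * (A1 t * y t + B1 t)| ≤ h/2 * (P*P + P) := by
      rw [abs_mul, abs_of_pos (by linarith : (0:ℝ) < h/2)]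
      apply mul_le_mul_of_nonneg_left _ (by linarith)
      calc |A1 t * y t + B1 t| ≤ |A1 t| * |y t| + |B1 t| := by
            rw [← abs_mul]; exact abs_add_le _ _
        _ ≤ P * P + P := add_le_add (mul_le_mul (bA1 t ht) (by0 t ht) (abs_nonneg _) hP0.le) (bB1 t ht)
    calc |D - y1 t| ≤ |D - y1 t - h/2 * (A1 t * y t + B1 t)| + |h/2 * (A1 t * y t + B1 t)| := by
          have := abs_add_le (D - y1 t - h/2 * (A1 t * y t + B1 t)) (h/2 * (A1 t * y t + B1 t))
          simpa using this
      _ ≤ 2*P^2*h^2 + h/2 * (P*P + P) := add_le_add hD1 h1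
      _ ≤ 3*P^2*h := by linarith [mul_nonneg (mul_nonneg (sq_nonneg P) hh.le) (by linarith : (0:ℝ) ≤ 1 - 2*h), mul_nonneg (mul_nonneg hh.le hP0.le) (sub_nonneg.2 hP), mul_nonneg (sq_nonneg P) hh.le]
  have hαA : |α - A t| ≤ P*h := by
    have h1 : |h/2 * A1 t| ≤ h/2 * P := by
      rw [abs_mul, abs_of_pos (by linarith : (0:ℝ) < h/2)]
      exact mul_le_mul_of_nonneg_left (bA1 t ht) (by linarith)
    calc |α - A t| ≤ |α - A t - h/2 * A1 t| + |h/2 * A1 t| := by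
          have := abs_add_le (α - A t - h/2 * A1 t) (h/2 * A1 t)
          simpa using this
      _ ≤ P * h^2 + h/2 * P := add_le_add hα h1
      _ ≤ P*h := by linarith [mul_nonneg (mul_nonneg hP0.le hh.le) (by linarith : (0:ℝ) ≤ 1 - 2*h)]
  have hαD : |α * D - A t * y1 t| ≤ 7*P^3*h := by
    have heq : α * D - A t * y1 t = α * (D - y1 t) + (α - A t) * y1 t := by ring
    rw [heq]
    calc |α * (D - y1 t) + (α - A t) * y1 t|
        ≤ |α| * |D - y1 t| + |α - A t| * |y1 t| := by
          rw [← abs_mul, ← abs_mul]; exact abs_add_le _ _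
      _ ≤ 2*P * (3*P^2*h) + P*h * P := by
          apply add_le_add
          · exact mul_le_mul hαb hDy1 (abs_nonneg _) (by positivity)
          · exact mul_le_mul hαA (by1 t ht) (abs_nonneg _) (by positivity)
      _ ≤ 7*P^3*h := by linarith [mul_nonneg (mul_nonneg (mul_nonneg hP0.le hP0.le) hh.le) (sub_nonneg.2 hP)]
  -- phi1 expansion
  have hr := phi1_quad hαh
  have hr2 : |phi1 (α*h) - 1 - (α*h)/2| ≤ 4*P^2*h^2 := by
    refine hr.trans ?_
    have : (α*h)^2 = |α*h|^2 := (sq_abs _).symm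
    rw [this]
    calc |α*h|^2 ≤ (2*P*h)^2 := by
          apply pow_le_pow_left₀ (abs_nonneg _)
          rw [abs_mul, abs_of_pos hh]
          exact mul_le_mul_of_nonneg_right hαb hh.le
      _ = 4*P^2*h^2 := by ring
  -- Taylor of y
  have tY := taylor2 hconv hP0.le hyd hy1d ly2 ht htp
  rw [habs2] at tY
  -- main decomposition
  have hdec : h * phi1 (α*h) * D - h * y1 t - h^2/2 * y2 t
      = h * (D - y1 t - h/2 * (A1 t * y t + B1 t))
        + h^2/2 * (α * D - A t * y1 t)
        + h * ((phi1 (α*h) - 1 - (α*h)/2) * D) := by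
    rw [hy2eq t ht]; ring
  have hmain : |h * phi1 (α*h) * D - h * y1 t - h^2/2 * y2 t| ≤ 23*P^4*h^3 := by
    rw [hdec]
    have e1 : |h * (D - y1 t - h/2 * (A1 t * y t + B1 t))| ≤ h * (2*P^2*h^2) := by
      rw [abs_mul, abs_of_pos hh]
      exact mul_le_mul_of_nonneg_left hD1 hh.le
    have e2 : |h^2/2 * (α * D - A t * y1 t)| ≤ h^2/2 * (7*P^3*h) := by
      rw [abs_mul, abs_of_pos (by positivity : (0:ℝ) < h^2/2)]
      exact mul_le_mul_of_nonneg_left hαD (by positivity)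
    have e3 : |h * ((phi1 (α*h) - 1 - (α*h)/2) * D)| ≤ h * (4*P^2*h^2 * (4*P^2)) := by
      rw [abs_mul, abs_of_pos hh, abs_mul]
      apply mul_le_mul_of_nonneg_left _ hh.le
      exact mul_le_mul hr2 hDb (abs_nonneg _) (by positivity)
    calc |h * (D - y1 t - h/2 * (A1 t * y t + B1 t))
        + h^2/2 * (α * D - A t * y1 t)
        + h * ((phi1 (α*h) - 1 - (α*h)/2) * D)|
        ≤ |h * (D - y1 t - h/2 * (A1 t * y t + B1 t))
          + h^2/2 * (α * D - A t * y1 t)|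
          + |h * ((phi1 (α*h) - 1 - (α*h)/2) * D)| := abs_add_le _ _
      _ ≤ |h * (D - y1 t - h/2 * (A1 t * y t + B1 t))|
          + |h^2/2 * (α * D - A t * y1 t)|
          + |h * ((phi1 (α*h) - 1 - (α*h)/2) * D)| := by
          have := abs_add_le (h * (D - y1 t - h/2 * (A1 t * y t + B1 t)))
            (h^2/2 * (α * D - A t * y1 t))
          linarith
      _ ≤ h * (2*P^2*h^2) + h^2/2 * (7*P^3*h) + h * (4*P^2*h^2 * (4*P^2)) :=
          add_le_add (add_le_add e1 e2) e3
      _ ≤ 23*P^4*h^3 := by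
          have h3 : (0:ℝ) ≤ h^3 := by positivity
          have hp2 : P^2 ≤ P^4 := pow_le_pow_right₀ hP (by norm_num)
          have hp3 : P^3 ≤ P^4 := pow_le_pow_right₀ hP (by norm_num)
          have e1 := mul_le_mul_of_nonneg_right hp2 h3
          have e2 := mul_le_mul_of_nonneg_right hp3 h3
          linarith [e1, e2, mul_nonneg (pow_nonneg hP0.le 4) h3]
  -- conclude
  have hfin : y (t + h) - y t - h * phi1 (α*h) * D
      = (y (t+h) - y t - (t + h - t) * y1 t - (t + h - t)^2/2 * y2 t)
        + (h * y1 t + h^2/2 * y2 t - h * phi1 (α*h) * D) := by ring_nf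
  calc |y (t + h) - y t - h * phi1 (α*h) * D|
      ≤ |y (t+h) - y t - (t + h - t) * y1 t - (t + h - t)^2/2 * y2 t|
        + |h * y1 t + h^2/2 * y2 t - h * phi1 (α*h) * D| := by
        rw [hfin]; exact abs_add_le _ _
    _ ≤ P * h^3 + 23*P^4*h^3 := by
        apply add_le_add tY
        rw [show h * y1 t + h^2/2 * y2 t - h * phi1 (α*h) * D
            = -(h * phi1 (α*h) * D - h * y1 t - h^2/2 * y2 t) from by ring, abs_neg]
        exact hmain
    _ ≤ 24 * P^4 * h^3 := by
        have h3 : (0:ℝ) ≤ h^3 := by positivity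
        have hp1 : P ≤ P^4 := by
          calc P = P^1 := (pow_one P).symm
            _ ≤ P^4 := pow_le_pow_right₀ hP (by norm_num)
        have := mul_le_mul_of_nonneg_right hp1 h3
        linarith [this]

lemma stability {P h αh αs βh βs Yv yv E : ℝ}
    (hP : 1 ≤ P) (hh : 0 < h) (hPh : 2 * P * h ≤ 1) (hE : 0 ≤ E)
    (hα : |αh - αs| ≤ 2*P*E) (hβ : |βh - βs| ≤ 2*P*E)
    (hαb : |αh| ≤ 2*P) (hαsb : |αs| ≤ 2*P) (hβb : |βh| ≤ 2*P)
    (hY : |Yv| ≤ P + 1) (hyv : |yv| ≤ P) (he : |Yv - yv| ≤ E) :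
    |phi1 (αh * h) * (αh * Yv + βh) - phi1 (αs * h) * (αs * yv + βs)|
      ≤ 60 * P^3 * E := by
  have hP0 : (0:ℝ) < P := lt_of_lt_of_le one_pos hP
  have hαh1 : |αh * h| ≤ 1 := by
    rw [abs_mul, abs_of_pos hh]
    have := mul_le_mul_of_nonneg_right hαb hh.le
    linarith
  have hαs1 : |αs * h| ≤ 1 := by
    rw [abs_mul, abs_of_pos hh]
    have := mul_le_mul_of_nonneg_right hαsb hh.le
    linarith
  have hphid : |phi1 (αh * h) - phi1 (αs * h)| ≤ 3 * P * E := by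
    calc |phi1 (αh * h) - phi1 (αs * h)| ≤ 3 * |αh * h - αs * h| := phi1_lip hαh1 hαs1
      _ = 3 * (|αh - αs| * h) := by
          rw [show αh * h - αs * h = (αh - αs) * h by ring, abs_mul, abs_of_pos hh]
      _ ≤ 3 * (2*P*E * h) := by
          have := mul_le_mul_of_nonneg_right hα hh.le
          linarith
      _ ≤ 3 * P * E := by
          linarith [mul_le_mul_of_nonneg_right hPh hE, mul_nonneg (sub_nonneg.2 hP) hE]

  have hT1 : |αh * Yv + βh| ≤ 6 * P^2 := by
    calc |αh * Yv + βh| ≤ |αh| * |Yv| + |βh| := by rw [← abs_mul]; exact abs_add_le _ _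
      _ ≤ 2*P * (P+1) + 2*P := add_le_add (mul_le_mul hαb hY (abs_nonneg _) (by positivity)) hβb
      _ ≤ 6*P^2 := by linarith [mul_nonneg (sub_nonneg.2 hP) hP0.le]
  have hT2 : |αh * Yv + βh - (αs * yv + βs)| ≤ 6 * P^2 * E := by
    have heq : αh * Yv + βh - (αs * yv + βs)
        = αh * (Yv - yv) + (αh - αs) * yv + (βh - βs) := by ring
    rw [heq]
    calc |αh * (Yv - yv) + (αh - αs) * yv + (βh - βs)|
        ≤ |αh * (Yv - yv) + (αh - αs) * yv| + |βh - βs| := abs_add_le _ _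
      _ ≤ |αh * (Yv - yv)| + |(αh - αs) * yv| + |βh - βs| := by
          linarith [abs_add_le (αh * (Yv - yv)) ((αh - αs) * yv)]
      _ = |αh| * |Yv - yv| + |αh - αs| * |yv| + |βh - βs| := by rw [abs_mul, abs_mul]
      _ ≤ 2*P * E + 2*P*E * P + 2*P*E := by
          refine add_le_add (add_le_add ?_ ?_) hβ
          · exact mul_le_mul hαb he (abs_nonneg _) (by positivity)
          · exact mul_le_mul hα hyv (abs_nonneg _) (by positivity)
      _ ≤ 6 * P^2 * E := by
          linarith [mul_nonneg (mul_nonneg (sub_nonneg.2 hP) hP0.le) hE]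
  have hphib := phi1_bound hαs1
  have key : phi1 (αh * h) * (αh * Yv + βh) - phi1 (αs * h) * (αs * yv + βs)
      = (phi1 (αh * h) - phi1 (αs * h)) * (αh * Yv + βh)
        + phi1 (αs * h) * (αh * Yv + βh - (αs * yv + βs)) := by ring
  rw [key]
  calc |(phi1 (αh * h) - phi1 (αs * h)) * (αh * Yv + βh)
        + phi1 (αs * h) * (αh * Yv + βh - (αs * yv + βs))|
      ≤ |phi1 (αh * h) - phi1 (αs * h)| * |αh * Yv + βh|
        + |phi1 (αs * h)| * |αh * Yv + βh - (αs * yv + βs)| := by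
        rw [← abs_mul, ← abs_mul]; exact abs_add_le _ _
    _ ≤ 3*P*E * (6*P^2) + 3 * (6*P^2*E) := by
        refine add_le_add ?_ ?_
        · exact mul_le_mul hphid hT1 (abs_nonneg _) (by positivity)
        · exact mul_le_mul hphib hT2 (abs_nonneg _) (by norm_num)
    _ ≤ 60 * P^3 * E := by
        linarith [mul_nonneg (mul_nonneg (mul_nonneg (sub_nonneg.2 hP) hP0.le) hP0.le) hE,
          mul_nonneg (mul_nonneg hP0.le hP0.le) hE]


set_option maxHeartbeats 2000000 in
/-- Order-2 convergence of the RL₂ scheme for `y' = a(t,y) y + b(t,y)` on `[0, T]`: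
`α_n = (3/2)a_n - (1/2)a_{n-1}`, `β_n = (3/2)b_n - (1/2)b_{n-1}`.
(The recurrence for `1 ≤ n < m` is written with `n = k + 1`.) -/
theorem RL2_convergence (T : ℝ) (hT : 0 < T) (a b : ℝ × ℝ → ℝ)
    (ha : ContDiff ℝ (⊤ : ℕ∞) a) (hb : ContDiff ℝ (⊤ : ℕ∞) b) (y : ℝ → ℝ)
    (hy : ∀ t ∈ Set.Icc 0 T,
      HasDerivWithinAt y (a (t, y t) * y t + b (t, y t)) (Set.Icc 0 T) t) :
    ∃ C > 0, ∃ h0 > 0, ∀ m : ℕ, 2 ≤ m → T / m ≤ h0 →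
      ∀ Y : ℕ → ℝ, Y 0 = y 0 → Y 1 = y (T / m) →
        (∀ k : ℕ, k + 1 < m →
          Y (k + 2) =
            Y (k + 1) +
              (T / m) *
                phi1 (((3 / 2) * a (((k + 1 : ℕ) : ℝ) * (T / m), Y (k + 1)) -
                    (1 / 2) * a ((k : ℝ) * (T / m), Y k)) * (T / m)) *
                (((3 / 2) * a (((k + 1 : ℕ) : ℝ) * (T / m), Y (k + 1)) -
                    (1 / 2) * a ((k : ℝ) * (T / m), Y k)) * Y (k + 1) +
                  ((3 / 2) * b (((k + 1 : ℕ) : ℝ) * (T / m), Y (k + 1)) -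
                    (1 / 2) * b ((k : ℝ) * (T / m), Y k)))) →
        ∀ n ≤ m, |Y n - y ((n : ℝ) * (T / m))| ≤ C * (T / m) ^ 2 := by
  classical
  set I : Set ℝ := Set.Icc 0 T with hIdef
  have hI : UniqueDiffOn ℝ I := uniqueDiffOn_Icc hT
  have hIconv : Convex ℝ I := convex_Icc 0 T
  have hIcomp : IsCompact I := isCompact_Icc
  -- smoothness of y
  have smooth : ∀ n : ℕ, ContDiffOn ℝ n y I := by
    intro n
    induction n with
    | zero => exact contDiffOn_zero.2 (fun t ht => (hy t ht).continuousWithinAt)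
    | succ n ih =>
      have hcast : ((n + 1 : ℕ) : WithTop ℕ∞) = (n : WithTop ℕ∞) + 1 := by norm_cast
      rw [hcast, contDiffOn_succ_iff_derivWithin hI]
      refine ⟨fun t ht => (hy t ht).differentiableWithinAt, by simp, ?_⟩
      have hty : ContDiffOn ℝ n (fun t : ℝ => (t, y t)) I := contDiffOn_id.prodMk ih
      exact ((((ha.of_le (by exact_mod_cast le_top)).comp_contDiffOn hty).mul ih).add
        ((hb.of_le (by exact_mod_cast le_top)).comp_contDiffOn hty)).congr
        fun t ht => (hy t ht).derivWithin (hI t ht)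
  -- the coefficient functions along the solution
  set A : ℝ → ℝ := fun t => a (t, y t) with hAdef
  set B : ℝ → ℝ := fun t => b (t, y t) with hBdef
  set y1 : ℝ → ℝ := fun t => A t * y t + B t with hy1def
  have hyd : ∀ t ∈ I, HasDerivWithinAt y (y1 t) I t := hy
  have hty3 : ContDiffOn ℝ (3:ℕ) (fun t : ℝ => (t, y t)) I := contDiffOn_id.prodMk (smooth 3)
  have Acd : ContDiffOn ℝ (3:ℕ) A I := (ha.of_le (WithTop.coe_le_coe.2 le_top)).comp_contDiffOn hty3
  have Bcd : ContDiffOn ℝ (3:ℕ) B I := (hb.of_le (WithTop.coe_le_coe.2 le_top)).comp_contDiffOn hty3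
  have ycd3 : ContDiffOn ℝ (3:ℕ) y I := smooth 3
  have y1cd : ContDiffOn ℝ (3:ℕ) y1 I := (Acd.mul ycd3).add Bcd
  set A1 : ℝ → ℝ := derivWithin A I with hA1def
  set B1 : ℝ → ℝ := derivWithin B I with hB1def
  have hAd : ∀ t ∈ I, HasDerivWithinAt A (A1 t) I t := by
    intro t ht
    exact ((Acd.differentiableOn (by norm_cast)) t ht).hasDerivWithinAt
  have hBd : ∀ t ∈ I, HasDerivWithinAt B (B1 t) I t := by
    intro t ht
    exact ((Bcd.differentiableOn (by norm_cast)) t ht).hasDerivWithinAt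
  have A1cd : ContDiffOn ℝ (2:ℕ) A1 I := Acd.derivWithin hI (by norm_cast)
  have B1cd : ContDiffOn ℝ (2:ℕ) B1 I := Bcd.derivWithin hI (by norm_cast)
  set y2 : ℝ → ℝ := fun t => A1 t * y t + A t * y1 t + B1 t with hy2def
  have hy1d : ∀ t ∈ I, HasDerivWithinAt y1 (y2 t) I t := by
    intro t ht
    exact (((hAd t ht).mul (hyd t ht)).add (hBd t ht))
  have y2cd : ContDiffOn ℝ (1:ℕ) y2 I := by
    refine ((((A1cd.of_le (by norm_cast)).mul (ycd3.of_le (by norm_cast))).add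
      ((Acd.of_le (by norm_cast)).mul (y1cd.of_le (by norm_cast)))).add
      (B1cd.of_le (by norm_cast)))
  -- bounds and Lipschitz constants on I
  obtain ⟨MA1, hMA1⟩ := hIcomp.exists_bound_of_continuousOn
    (A1cd.continuousOn (𝕜 := ℝ))
  obtain ⟨MB1, hMB1⟩ := hIcomp.exists_bound_of_continuousOn (B1cd.continuousOn (𝕜 := ℝ))
  obtain ⟨My, hMy⟩ := hIcomp.exists_bound_of_continuousOn (ycd3.continuousOn (𝕜 := ℝ))
  obtain ⟨My1, hMy1⟩ := hIcomp.exists_bound_of_continuousOn (y1cd.continuousOn (𝕜 := ℝ))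
  obtain ⟨LA1, hLA10, hLA1⟩ := lip_of_cd hIcomp hIconv hI (A1cd.of_le (by norm_cast))
  obtain ⟨LB1, hLB10, hLB1⟩ := lip_of_cd hIcomp hIconv hI (B1cd.of_le (by norm_cast))
  obtain ⟨Ly2, hLy20, hLy2⟩ := lip_of_cd hIcomp hIconv hI y2cd
  -- compact box for (a, b)
  set K : Set (ℝ × ℝ) := I ×ˢ Set.Icc (-(My+1)) (My+1) with hKdef
  have hKcomp : IsCompact K := hIcomp.prod isCompact_Icc
  have hKconv : Convex ℝ K := hIconv.prod (convex_Icc _ _)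
  obtain ⟨Ma, hMa⟩ := hKcomp.exists_bound_of_continuousOn ha.continuous.continuousOn
  obtain ⟨Mb, hMb⟩ := hKcomp.exists_bound_of_continuousOn hb.continuous.continuousOn
  obtain ⟨La, hLa0, hLa⟩ := lip2_of_cd ha hKcomp hKconv
  obtain ⟨Lb, hLb0, hLb⟩ := lip2_of_cd hb hKcomp hKconv
  -- the master constant
  set P : ℝ := 1 + |MA1| + |MB1| + |My| + |My1| + LA1 + LB1 + Ly2 + |Ma| + |Mb| + La + Lb
    with hPdef
  have hP : 1 ≤ P := by
    have := abs_nonneg MA1; have := abs_nonneg MB1; have := abs_nonneg My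
    have := abs_nonneg My1; have := abs_nonneg Ma; have := abs_nonneg Mb
    rw [hPdef]; linarith
  have hP0 : (0:ℝ) < P := lt_of_lt_of_le one_pos hP
  -- all the P-bounds
  have by0P : ∀ x ∈ I, |y x| ≤ P := by
    intro x hx
    refine (hMy x hx).trans ?_
    rw [hPdef]
    have := abs_nonneg MA1; have := abs_nonneg MB1; have := abs_nonneg My1
    have := abs_nonneg Ma; have := abs_nonneg Mb
    have := le_abs_self My
    linarith
  have memK : ∀ x ∈ I, (x, y x) ∈ K := by
    intro x hx
    refine ⟨hx, ?_⟩
    have h1 := abs_le.1 (hMy x hx)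
    exact ⟨by linarith [h1.1], by linarith [h1.2]⟩
  have memK' : ∀ x ∈ I, ∀ u : ℝ, |u| ≤ My + 1 → (x, u) ∈ K := by
    intro x hx u hu
    have h1 := abs_le.1 hu
    exact ⟨hx, h1.1, h1.2⟩
  have hMaP : |Ma| ≤ P := by
    rw [hPdef]
    have := abs_nonneg MA1; have := abs_nonneg MB1; have := abs_nonneg My
    have := abs_nonneg My1; have := abs_nonneg Mb
    linarith
  have hMbP : |Mb| ≤ P := by
    rw [hPdef]
    have := abs_nonneg MA1; have := abs_nonneg MB1; have := abs_nonneg My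
    have := abs_nonneg My1; have := abs_nonneg Ma
    linarith
  have haP : ∀ p ∈ K, |a p| ≤ P := by
    intro p hp
    exact (hMa p hp).trans ((le_abs_self Ma).trans hMaP)
  have hbP : ∀ p ∈ K, |b p| ≤ P := by
    intro p hp
    exact (hMb p hp).trans ((le_abs_self Mb).trans hMbP)
  have bAP : ∀ x ∈ I, |A x| ≤ P := by
    intro x hx
    have := haP (x, y x) (memK x hx)
    rw [hAdef]
    exact this
  have bBP : ∀ x ∈ I, |B x| ≤ P := by
    intro x hx
    have := hbP (x, y x) (memK x hx)
    rw [hBdef]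
    exact this
  have bA1P : ∀ x ∈ I, |A1 x| ≤ P := by
    intro x hx
    refine (hMA1 x hx).trans ?_
    rw [hPdef]
    have := abs_nonneg MB1; have := abs_nonneg My; have := abs_nonneg My1
    have := abs_nonneg Ma; have := abs_nonneg Mb; have := le_abs_self MA1
    linarith
  have bB1P : ∀ x ∈ I, |B1 x| ≤ P := by
    intro x hx
    refine (hMB1 x hx).trans ?_
    rw [hPdef]
    have := abs_nonneg MA1; have := abs_nonneg My; have := abs_nonneg My1
    have := abs_nonneg Ma; have := abs_nonneg Mb; have := le_abs_self MB1
    linarith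
  have by1P : ∀ x ∈ I, |y1 x| ≤ P := by
    intro x hx
    refine (hMy1 x hx).trans ?_
    rw [hPdef]
    have := abs_nonneg MA1; have := abs_nonneg MB1; have := abs_nonneg My
    have := abs_nonneg Ma; have := abs_nonneg Mb; have := le_abs_self My1
    linarith
  have hLA1P : LA1 ≤ P := by
    rw [hPdef]
    have := abs_nonneg MA1; have := abs_nonneg MB1; have := abs_nonneg My
    have := abs_nonneg My1; have := abs_nonneg Ma; have := abs_nonneg Mb
    linarith
  have hLB1P : LB1 ≤ P := by
    rw [hPdef]
    have := abs_nonneg MA1; have := abs_nonneg MB1; have := abs_nonneg My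
    have := abs_nonneg My1; have := abs_nonneg Ma; have := abs_nonneg Mb
    linarith
  have hLy2P : Ly2 ≤ P := by
    rw [hPdef]
    have := abs_nonneg MA1; have := abs_nonneg MB1; have := abs_nonneg My
    have := abs_nonneg My1; have := abs_nonneg Ma; have := abs_nonneg Mb
    linarith
  have hLaP : La ≤ P := by
    rw [hPdef]
    have := abs_nonneg MA1; have := abs_nonneg MB1; have := abs_nonneg My
    have := abs_nonneg My1; have := abs_nonneg Ma; have := abs_nonneg Mb
    linarith
  have hLbP : Lb ≤ P := by
    rw [hPdef]
    have := abs_nonneg MA1; have := abs_nonneg MB1; have := abs_nonneg My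
    have := abs_nonneg My1; have := abs_nonneg Ma; have := abs_nonneg Mb
    linarith
  have lA1P : ∀ x ∈ I, ∀ z ∈ I, |A1 x - A1 z| ≤ P * |x - z| := fun x hx z hz =>
    (hLA1 x hx z hz).trans (mul_le_mul_of_nonneg_right hLA1P (abs_nonneg _))
  have lB1P : ∀ x ∈ I, ∀ z ∈ I, |B1 x - B1 z| ≤ P * |x - z| := fun x hx z hz =>
    (hLB1 x hx z hz).trans (mul_le_mul_of_nonneg_right hLB1P (abs_nonneg _))
  have ly2P : ∀ x ∈ I, ∀ z ∈ I, |y2 x - y2 z| ≤ P * |x - z| := fun x hx z hz =>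
    (hLy2 x hx z hz).trans (mul_le_mul_of_nonneg_right hLy2P (abs_nonneg _))
  -- vertical Lipschitz bounds for a and b
  have laV : ∀ x ∈ I, ∀ u v : ℝ, |u| ≤ My + 1 → |v| ≤ My + 1 →
      |a (x, u) - a (x, v)| ≤ P * |u - v| := by
    intro x hx u v hu hv
    have := hLa (x, u) (memK' x hx u hu) (x, v) (memK' x hx v hv)
    simp only [sub_self, abs_zero, zero_add] at this
    exact this.trans (mul_le_mul_of_nonneg_right hLaP (abs_nonneg _))
  have lbV : ∀ x ∈ I, ∀ u v : ℝ, |u| ≤ My + 1 → |v| ≤ My + 1 →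
      |b (x, u) - b (x, v)| ≤ P * |u - v| := by
    intro x hx u v hu hv
    have := hLb (x, u) (memK' x hx u hu) (x, v) (memK' x hx v hv)
    simp only [sub_self, abs_zero, zero_add] at this
    exact this.trans (mul_le_mul_of_nonneg_right hLbP (abs_nonneg _))
  have hMyP : My + 1 ≤ P + 1 := by
    have : My ≤ P := by
      rw [hPdef]
      have := abs_nonneg MA1; have := abs_nonneg MB1; have := abs_nonneg My1
      have := abs_nonneg Ma; have := abs_nonneg Mb; have := le_abs_self My
      linarith
    linarith
  -- constants
  clear_value P
  set C0 : ℝ := 24 * P^4 * T * Real.exp (120 * P^3 * T) with hC0def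
  have hC0nonneg : 0 ≤ C0 := by
    rw [hC0def]
    exact mul_nonneg (mul_nonneg (by positivity) hT.le) (Real.exp_pos _).le
  clear_value C0
  set C : ℝ := C0 + 1 with hCdef
  have hCpos : 0 < C := by rw [hCdef]; linarith
  clear_value C
  refine ⟨C, hCpos, min (1/(2*P)) (1/C), lt_min (by positivity) (by positivity), ?_⟩
  intro m hm hh0 Y hY0 hY1 hrec
  set h : ℝ := T / m with hhdef
  have hm0 : (0:ℝ) < (m:ℝ) := by
    have : 0 < m := by omega
    exact_mod_cast this
  have hhpos : 0 < h := by rw [hhdef]; positivity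
  clear_value h
  have hmT : (m:ℝ) * h = T := by
    rw [hhdef]; field_simp
  have hh2P : 2 * P * h ≤ 1 := by
    have h1 : h ≤ 1/(2*P) := hh0.trans (min_le_left _ _)
    rw [le_div_iff₀ (by positivity : (0:ℝ) < 2*P)] at h1
    linarith
  have hhC : h * C ≤ 1 := by
    have h1 : h ≤ 1/C := hh0.trans (min_le_right _ _)
    rw [le_div_iff₀ hCpos] at h1
    exact h1
  have hCh2 : C * h^2 ≤ h := by
    have := mul_nonneg hhpos.le (sub_nonneg.2 hhC)
    nlinarith
  have hhhalf : h ≤ 1/2 := by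
    have := mul_le_mul_of_nonneg_right hP (by linarith : (0:ℝ) ≤ 2*h)
    linarith
  have hCh1 : C * h^2 ≤ 1 := by linarith
  have tmem : ∀ n : ℕ, n ≤ m → ((n:ℝ) * h) ∈ I := by
    intro n hn
    constructor
    · exact mul_nonneg (Nat.cast_nonneg n) hhpos.le
    · have hcast : (n:ℝ) ≤ (m:ℝ) := by exact_mod_cast hn
      calc (n:ℝ) * h ≤ (m:ℝ) * h := mul_le_mul_of_nonneg_right hcast hhpos.le
        _ = T := hmT
  -- the error sequence and the Gronwall majorant
  set e : ℕ → ℝ := fun n => Y n - y ((n:ℝ) * h) with hedef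
  clear_value e
  have heq : ∀ n : ℕ, e n = Y n - y ((n:ℝ) * h) := fun n => by rw [hedef]
  set X : ℝ := 1 + 120 * P^3 * h with hXdef
  clear_value X
  have hX1 : (1:ℝ) ≤ X := by
    rw [hXdef]
    have : (0:ℝ) ≤ 120 * P^3 * h := by
      exact mul_nonneg (by positivity) hhpos.le
    linarith
  have hX0 : (0:ℝ) ≤ X := by linarith
  set G : ℕ → ℝ := fun n => 24 * P^4 * h^3 * n * X^n with hGdef
  clear_value G
  have hGeq : ∀ n : ℕ, G n = 24 * P^4 * h^3 * n * X^n := fun n => by rw [hGdef]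
  have hch3 : (0:ℝ) ≤ 24 * P^4 * h^3 := by
    exact mul_nonneg (by positivity) (pow_nonneg hhpos.le 3)
  have hGnonneg : ∀ n : ℕ, 0 ≤ G n := by
    intro n
    rw [hGeq]
    exact mul_nonneg (mul_nonneg hch3 (Nat.cast_nonneg n)) (pow_nonneg hX0 n)
  have hGmono : ∀ n : ℕ, G n ≤ G (n + 1) := by
    intro n
    rw [hGeq, hGeq]
    have h1 : ((n:ℝ)) ≤ ((n+1 : ℕ):ℝ) := by exact_mod_cast Nat.le_succ n
    have h2 : X^n ≤ X^(n+1) := pow_le_pow_right₀ hX1 (Nat.le_succ n)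
    calc 24 * P^4 * h^3 * n * X^n ≤ 24 * P^4 * h^3 * ((n+1:ℕ):ℝ) * X^n := by
          exact mul_le_mul_of_nonneg_right (mul_le_mul_of_nonneg_left h1 hch3) (pow_nonneg hX0 n)
      _ ≤ 24 * P^4 * h^3 * ((n+1:ℕ):ℝ) * X^(n+1) :=
          mul_le_mul_of_nonneg_left h2 (mul_nonneg hch3 (Nat.cast_nonneg _))
  have boundG : ∀ n : ℕ, n ≤ m → G n ≤ C0 * h^2 := by
    intro n hn
    have hnh : (n:ℝ) * h ≤ T := by
      have hcast : (n:ℝ) ≤ (m:ℝ) := by exact_mod_cast hn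
      calc (n:ℝ) * h ≤ (m:ℝ) * h := mul_le_mul_of_nonneg_right hcast hhpos.le
        _ = T := hmT
    have hXexp : X^n ≤ Real.exp (120 * P^3 * T) := by
      have h1 : X ≤ Real.exp (120 * P^3 * h) := by
        rw [hXdef]
        have := Real.add_one_le_exp (120 * P^3 * h)
        linarith
      calc X^n ≤ (Real.exp (120 * P^3 * h))^n := pow_le_pow_left₀ hX0 h1 n
        _ = Real.exp ((n:ℝ) * (120 * P^3 * h)) := (Real.exp_nat_mul _ n).symm
        _ ≤ Real.exp (120 * P^3 * T) := by
            apply Real.exp_le_exp.2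
            have : (n:ℝ) * (120 * P^3 * h) = 120 * P^3 * ((n:ℝ) * h) := by ring
            rw [this]
            exact mul_le_mul_of_nonneg_left hnh (by positivity)
    calc G n = 24 * P^4 * h^2 * ((n:ℝ) * h) * X^n := by rw [hGeq]; ring
      _ ≤ 24 * P^4 * h^2 * T * X^n := by
          apply mul_le_mul_of_nonneg_right _ (pow_nonneg hX0 n)
          exact mul_le_mul_of_nonneg_left hnh (by positivity)

      _ ≤ 24 * P^4 * h^2 * T * Real.exp (120 * P^3 * T) := by
          apply mul_le_mul_of_nonneg_left hXexp
          exact mul_nonneg (by positivity) hT.le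
      _ = C0 * h^2 := by rw [hC0def]; ring
  have boundGC : ∀ n : ℕ, n ≤ m → G n ≤ C * h^2 := by
    intro n hn
    refine (boundG n hn).trans ?_
    rw [hCdef]
    have : (0:ℝ) ≤ h^2 := sq_nonneg h
    linarith
  have le1 : ∀ n : ℕ, n ≤ m → |e n| ≤ G n → |e n| ≤ 1 := by
    intro n hn hG
    calc |e n| ≤ G n := hG
      _ ≤ C * h^2 := boundGC n hn
      _ ≤ 1 := hCh1
  have abs_sub_le' : ∀ x y : ℝ, |x - y| ≤ |x| + |y| := by
    intro x y
    calc |x - y| = |x + (-y)| := by rw [sub_eq_add_neg]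
      _ ≤ |x| + |-y| := abs_add_le _ _
      _ = |x| + |y| := by rw [abs_neg]
  have hMyb : ∀ x ∈ I, |y x| ≤ My + 1 := fun x hx => (hMy x hx).trans (by linarith)
  -- one-step error estimate
  have step : ∀ k : ℕ, k + 2 ≤ m → |e k| ≤ 1 → |e (k+1)| ≤ 1 →
      |e (k+2)| ≤ |e (k+1)| + h * (60 * P^3 * (|e (k+1)| + |e k|)) + 24 * P^4 * h^3 := by
    intro k hk2 heklt hek1lt
    have hk1m : k + 1 ≤ m := by omega
    have hkm : k ≤ m := by omega
    have htk1 : (((k+1:ℕ)):ℝ) * h ∈ I := tmem (k+1) hk1m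
    have htk : ((k:ℕ):ℝ) * h ∈ I := tmem k hkm
    have htk2 : (((k+2:ℕ)):ℝ) * h ∈ I := tmem (k+2) hk2
    have ekk : (((k+1:ℕ)):ℝ) * h + h = (((k+2:ℕ)):ℝ) * h := by push_cast; ring
    have emm : (((k+1:ℕ)):ℝ) * h - h = ((k:ℕ):ℝ) * h := by push_cast; ring
    -- truncation estimate for the exact solution
    have trunc := truncation hIconv hP hhpos hh2P htk1 (by rw [ekk]; exact htk2)
      (by rw [emm]; exact htk) hyd hy1d hAd hBd (fun x _ => rfl)
      (fun x _ => rfl) bAP bBP bA1P bB1P by0P by1P lA1P lB1P ly2P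
    rw [emm, ekk] at trunc
    simp only [hAdef, hBdef] at trunc
    -- abbreviations
    obtain ⟨αh, hαh⟩ : ∃ v : ℝ, v = 3/2 * a ((((k+1:ℕ)):ℝ) * h, Y (k+1))
        - 1/2 * a (((k:ℕ):ℝ) * h, Y k) := ⟨_, rfl⟩
    obtain ⟨βh, hβh⟩ : ∃ v : ℝ, v = 3/2 * b ((((k+1:ℕ)):ℝ) * h, Y (k+1))
        - 1/2 * b (((k:ℕ):ℝ) * h, Y k) := ⟨_, rfl⟩
    obtain ⟨αs, hαs⟩ : ∃ v : ℝ, v = 3/2 * a ((((k+1:ℕ)):ℝ) * h, y ((((k+1:ℕ)):ℝ) * h))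
        - 1/2 * a (((k:ℕ):ℝ) * h, y (((k:ℕ):ℝ) * h)) := ⟨_, rfl⟩
    obtain ⟨βs, hβs⟩ : ∃ v : ℝ, v = 3/2 * b ((((k+1:ℕ)):ℝ) * h, y ((((k+1:ℕ)):ℝ) * h))
        - 1/2 * b (((k:ℕ):ℝ) * h, y (((k:ℕ):ℝ) * h)) := ⟨_, rfl⟩
    rw [← hαs, ← hβs] at trunc
    -- size of the numerical solution
    have hYe1 : Y (k+1) = y ((((k+1:ℕ)):ℝ) * h) + e (k+1) := by rw [heq (k+1)]; ring
    have hYe0 : Y k = y (((k:ℕ):ℝ) * h) + e k := by rw [heq k]; ring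
    have hYk1 : |Y (k+1)| ≤ My + 1 := by
      calc |Y (k+1)| ≤ |y ((((k+1:ℕ)):ℝ) * h)| + |e (k+1)| := by
            rw [hYe1]; exact abs_add_le _ _
        _ ≤ My + 1 := add_le_add (hMy _ htk1) hek1lt
    have hYk0 : |Y k| ≤ My + 1 := by
      calc |Y k| ≤ |y (((k:ℕ):ℝ) * h)| + |e k| := by rw [hYe0]; exact abs_add_le _ _
        _ ≤ My + 1 := add_le_add (hMy _ htk) heklt
    -- Lipschitz differences
    have d1a : |a ((((k+1:ℕ)):ℝ) * h, Y (k+1)) - a ((((k+1:ℕ)):ℝ) * h, y ((((k+1:ℕ)):ℝ) * h))|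
        ≤ P * |e (k+1)| := by
      have := laV _ htk1 (Y (k+1)) (y ((((k+1:ℕ)):ℝ) * h)) hYk1 (hMyb _ htk1)
      rwa [show Y (k+1) - y ((((k+1:ℕ)):ℝ) * h) = e (k+1) from (heq (k+1)).symm] at this
    have d0a : |a (((k:ℕ):ℝ) * h, Y k) - a (((k:ℕ):ℝ) * h, y (((k:ℕ):ℝ) * h))|
        ≤ P * |e k| := by
      have := laV _ htk (Y k) (y (((k:ℕ):ℝ) * h)) hYk0 (hMyb _ htk)
      rwa [show Y k - y (((k:ℕ):ℝ) * h) = e k from (heq k).symm] at this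
    have d1b : |b ((((k+1:ℕ)):ℝ) * h, Y (k+1)) - b ((((k+1:ℕ)):ℝ) * h, y ((((k+1:ℕ)):ℝ) * h))|
        ≤ P * |e (k+1)| := by
      have := lbV _ htk1 (Y (k+1)) (y ((((k+1:ℕ)):ℝ) * h)) hYk1 (hMyb _ htk1)
      rwa [show Y (k+1) - y ((((k+1:ℕ)):ℝ) * h) = e (k+1) from (heq (k+1)).symm] at this
    have d0b : |b (((k:ℕ):ℝ) * h, Y k) - b (((k:ℕ):ℝ) * h, y (((k:ℕ):ℝ) * h))|
        ≤ P * |e k| := by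
      have := lbV _ htk (Y k) (y (((k:ℕ):ℝ) * h)) hYk0 (hMyb _ htk)
      rwa [show Y k - y (((k:ℕ):ℝ) * h) = e k from (heq k).symm] at this
    -- stability hypotheses
    have hE0 : (0:ℝ) ≤ |e (k+1)| + |e k| := by positivity
    have hαdiff : |αh - αs| ≤ 2 * P * (|e (k+1)| + |e k|) := by
      have hsplit : αh - αs
          = 3/2 * (a ((((k+1:ℕ)):ℝ) * h, Y (k+1)) - a ((((k+1:ℕ)):ℝ) * h, y ((((k+1:ℕ)):ℝ) * h)))
            - 1/2 * (a (((k:ℕ):ℝ) * h, Y k) - a (((k:ℕ):ℝ) * h, y (((k:ℕ):ℝ) * h))) := by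
        rw [hαh, hαs]; ring
      rw [hsplit]
      have t1 := abs_sub_le'
        (3/2 * (a ((((k+1:ℕ)):ℝ) * h, Y (k+1)) - a ((((k+1:ℕ)):ℝ) * h, y ((((k+1:ℕ)):ℝ) * h))))
        (1/2 * (a (((k:ℕ):ℝ) * h, Y k) - a (((k:ℕ):ℝ) * h, y (((k:ℕ):ℝ) * h))))
      rw [abs_mul, abs_mul] at t1
      have c1 : |(3/2 : ℝ)| = 3/2 := by norm_num
      have c2 : |(1/2 : ℝ)| = 1/2 := by norm_num
      rw [c1, c2] at t1
      refine t1.trans ?_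
      have p1 : (0:ℝ) ≤ P * |e k| := mul_nonneg hP0.le (abs_nonneg _)
      have p2 : (0:ℝ) ≤ P * |e (k+1)| := mul_nonneg hP0.le (abs_nonneg _)
      linarith only [d1a, d0a, p1, p2, t1]
    have hβdiff : |βh - βs| ≤ 2 * P * (|e (k+1)| + |e k|) := by
      have hsplit : βh - βs
          = 3/2 * (b ((((k+1:ℕ)):ℝ) * h, Y (k+1)) - b ((((k+1:ℕ)):ℝ) * h, y ((((k+1:ℕ)):ℝ) * h)))
            - 1/2 * (b (((k:ℕ):ℝ) * h, Y k) - b (((k:ℕ):ℝ) * h, y (((k:ℕ):ℝ) * h))) := by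
        rw [hβh, hβs]; ring
      rw [hsplit]
      have t1 := abs_sub_le'
        (3/2 * (b ((((k+1:ℕ)):ℝ) * h, Y (k+1)) - b ((((k+1:ℕ)):ℝ) * h, y ((((k+1:ℕ)):ℝ) * h))))
        (1/2 * (b (((k:ℕ):ℝ) * h, Y k) - b (((k:ℕ):ℝ) * h, y (((k:ℕ):ℝ) * h))))
      rw [abs_mul, abs_mul] at t1
      have c1 : |(3/2 : ℝ)| = 3/2 := by norm_num
      have c2 : |(1/2 : ℝ)| = 1/2 := by norm_num
      rw [c1, c2] at t1
      refine t1.trans ?_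
      have p1 : (0:ℝ) ≤ P * |e k| := mul_nonneg hP0.le (abs_nonneg _)
      have p2 : (0:ℝ) ≤ P * |e (k+1)| := mul_nonneg hP0.le (abs_nonneg _)
      linarith only [d1b, d0b, p1, p2, t1]
    have ha1 := abs_le.1 (haP _ (memK' _ htk1 _ hYk1))
    have ha0 := abs_le.1 (haP _ (memK' _ htk _ hYk0))
    have has1 := abs_le.1 (haP _ (memK _ htk1))
    have has0 := abs_le.1 (haP _ (memK _ htk))
    have hb1 := abs_le.1 (hbP _ (memK' _ htk1 _ hYk1))
    have hb0 := abs_le.1 (hbP _ (memK' _ htk _ hYk0))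
    have hαhb : |αh| ≤ 2*P := abs_le.2 ⟨by rw [hαh]; linarith only [ha1.1, ha1.2, ha0.1, ha0.2, hP0],
      by rw [hαh]; linarith only [ha1.1, ha1.2, ha0.1, ha0.2, hP0]⟩
    have hαsb : |αs| ≤ 2*P := abs_le.2 ⟨by rw [hαs]; linarith only [has1.1, has1.2, has0.1, has0.2, hP0],
      by rw [hαs]; linarith only [has1.1, has1.2, has0.1, has0.2, hP0]⟩
    have hβhb : |βh| ≤ 2*P := abs_le.2 ⟨by rw [hβh]; linarith only [hb1.1, hb1.2, hb0.1, hb0.2, hP0],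
      by rw [hβh]; linarith only [hb1.1, hb1.2, hb0.1, hb0.2, hP0]⟩
    have hYb : |Y (k+1)| ≤ P + 1 := hYk1.trans hMyP
    have heE : |Y (k+1) - y ((((k+1:ℕ)):ℝ) * h)| ≤ |e (k+1)| + |e k| := by
      rw [show Y (k+1) - y ((((k+1:ℕ)):ℝ) * h) = e (k+1) from (heq (k+1)).symm]
      linarith only [abs_nonneg (e k)]
    have stab := stability hP hhpos hh2P hE0 hαdiff hβdiff hαhb hαsb hβhb hYb
      (by0P _ htk1) heE
    -- the recurrence
    have hrecK := hrec k (by omega)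
    rw [← hαh, ← hβh] at hrecK
    -- error decomposition
    have edec : e (k+2) = e (k+1)
        + h * (phi1 (αh*h) * (αh * Y (k+1) + βh)
            - phi1 (αs*h) * (αs * y ((((k+1:ℕ)):ℝ) * h) + βs))
        - (y ((((k+2:ℕ)):ℝ) * h) - y ((((k+1:ℕ)):ℝ) * h)
            - h * (phi1 (αs*h) * (αs * y ((((k+1:ℕ)):ℝ) * h) + βs))) := by
      rw [heq (k+2), heq (k+1), hrecK]; ring
    rw [edec]
    have habs1 : |e (k+1)
        + h * (phi1 (αh*h) * (αh * Y (k+1) + βh)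
            - phi1 (αs*h) * (αs * y ((((k+1:ℕ)):ℝ) * h) + βs))
        - (y ((((k+2:ℕ)):ℝ) * h) - y ((((k+1:ℕ)):ℝ) * h)
            - h * (phi1 (αs*h) * (αs * y ((((k+1:ℕ)):ℝ) * h) + βs)))|
        ≤ |e (k+1)|
          + |h * (phi1 (αh*h) * (αh * Y (k+1) + βh)
            - phi1 (αs*h) * (αs * y ((((k+1:ℕ)):ℝ) * h) + βs))|
          + |y ((((k+2:ℕ)):ℝ) * h) - y ((((k+1:ℕ)):ℝ) * h)
            - h * (phi1 (αs*h) * (αs * y ((((k+1:ℕ)):ℝ) * h) + βs))| := by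
      refine (abs_sub_le' _ _).trans ?_
      have := abs_add_le (e (k+1)) (h * (phi1 (αh*h) * (αh * Y (k+1) + βh)
            - phi1 (αs*h) * (αs * y ((((k+1:ℕ)):ℝ) * h) + βs)))
      linarith only [this]
    refine habs1.trans ?_
    have hmid : |h * (phi1 (αh*h) * (αh * Y (k+1) + βh)
          - phi1 (αs*h) * (αs * y ((((k+1:ℕ)):ℝ) * h) + βs))|
        ≤ h * (60 * P^3 * (|e (k+1)| + |e k|)) := by
      rw [abs_mul, abs_of_pos hhpos]
      exact mul_le_mul_of_nonneg_left stab hhpos.le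
    have htr : |y ((((k+2:ℕ)):ℝ) * h) - y ((((k+1:ℕ)):ℝ) * h)
        - h * (phi1 (αs*h) * (αs * y ((((k+1:ℕ)):ℝ) * h) + βs))| ≤ 24 * P^4 * h^3 := by
      have : y ((((k+2:ℕ)):ℝ) * h) - y ((((k+1:ℕ)):ℝ) * h)
          - h * (phi1 (αs*h) * (αs * y ((((k+1:ℕ)):ℝ) * h) + βs))
          = y ((((k+2:ℕ)):ℝ) * h) - y ((((k+1:ℕ)):ℝ) * h)
          - h * phi1 (αs*h) * (αs * y ((((k+1:ℕ)):ℝ) * h) + βs) := by ring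
      rw [this]
      exact trunc
    linarith only [hmid, htr]
  -- two-step induction
  have key : ∀ k : ℕ, k + 1 ≤ m → |e k| ≤ G k ∧ |e (k+1)| ≤ G (k+1) := by
    intro k
    induction k with
    | zero =>
      intro _
      constructor
      · have h0 : e 0 = 0 := by
          rw [heq 0]
          simp only [Nat.cast_zero, zero_mul]
          rw [hY0, sub_self]
        rw [h0, abs_zero]
        exact hGnonneg 0
      · have h1 : e 1 = 0 := by
          rw [heq 1]
          simp only [Nat.cast_one, one_mul]
          rw [hY1, hhdef, sub_self]
        rw [h1, abs_zero]
        exact hGnonneg 1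
    | succ k ih =>
      intro hk2
      have hk1 : k + 1 ≤ m := by omega
      obtain ⟨hek, hek1⟩ := ih hk1
      refine ⟨hek1, ?_⟩
      have hS := step k (by omega) (le1 k (by omega) hek) (le1 (k+1) hk1 hek1)
      have hGk : G k ≤ G (k+1) := hGmono k
      have h60 : (0:ℝ) ≤ 60*P^3 := by positivity
      calc |e (k+1+1)| ≤ |e (k+1)| + h * (60*P^3*(|e (k+1)| + |e k|)) + 24*P^4*h^3 := hS
        _ ≤ G (k+1) + h * (60*P^3*(G (k+1) + G (k+1))) + 24*P^4*h^3 := by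
            have hmul : h * (60*P^3*(|e (k+1)| + |e k|)) ≤ h * (60*P^3*(G (k+1) + G (k+1))) := by
              apply mul_le_mul_of_nonneg_left _ hhpos.le
              apply mul_le_mul_of_nonneg_left _ h60
              linarith only [hek, hek1, hGk]
            linarith only [hmul, hek1]
        _ ≤ G (k+1+1) := by
            rw [hGeq (k+1), hGeq (k+1+1)]
            push_cast
            obtain ⟨q, hq⟩ : ∃ q : ℝ, q = X^(k+1) := ⟨_, rfl⟩
            have hx2 : X^(k+1+1) = q * X := by rw [hq, pow_succ]
            rw [hx2, ← hq]
            have hmulX : h * (60*P^3*(24*P^4*h^3*((k:ℝ)+1)*q + 24*P^4*h^3*((k:ℝ)+1)*q))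
                = (X-1)*(24*P^4*h^3*((k:ℝ)+1)*q) := by
              rw [hXdef]; ring
            have hqX : (1:ℝ) ≤ q * X := by
              rw [hq, ← pow_succ]; exact one_le_pow₀ hX1
            have f1 : 24*P^4*h^3 ≤ 24*P^4*h^3*(q*X) := by
              calc 24*P^4*h^3 = 24*P^4*h^3 * 1 := by ring
                _ ≤ 24*P^4*h^3*(q*X) := mul_le_mul_of_nonneg_left hqX hch3
            linarith only [hmulX, f1]
  -- conclusion
  intro n hn
  have hen : |e n| ≤ G n := by
    cases n with
    | zero => exact (key 0 (by omega)).1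
    | succ k => exact (key k hn).2
  have hfin := hen.trans (boundGC n hn)
  rw [heq n] at hfin
  exact hfin
end
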